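/- arXiv:2603.01114 — 15 statements merged into one kernel-verified Lean document; each statement's English description precedes it below -/
import Mathlib

section
/- Let I and J be ideals on ω. If I ≤_BW J, then every topological space with the BW(J) property also has the BW(I) property. -/
open Set Filter Topology

/-- An ideal on a set `M`: closed under subsets and finite unions, contains all
finite sets, and is proper. -/
structure IsIdeal {M : Type*} (I : Set (Set M)) : Prop where
  mem_of_subset : ∀ ⦃A B : Set M⦄, A ⊆ B → B ∈ I → A ∈ I
  union_mem : ∀ ⦃A B : Set M⦄, A ∈ I → B ∈ I → A ∪ B ∈ I
  finite_mem : ∀ ⦃A : Set M⦄, A.Finite → A ∈ I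
  univ_not_mem : (Set.univ : Set M) ∉ I

/-- `BWle I J` formalizes `I ≤_BW J`, where `I` is an ideal on `N` and `J` is an
ideal on `M`: there is `f : M → N` such that for every `J`-positive `A` there is an
`I`-positive `B ⊆ f[A]` such that for every `C` with `C ∩ B` `I`-positive, the set
`A ∩ f⁻¹[C]` is `J`-positive. -/
def BWle {N M : Type*} (I : Set (Set N)) (J : Set (Set M)) : Prop :=
  ∃ f : M → N, ∀ A : Set M, A ∉ J →
    ∃ B : Set N, B ⊆ f '' A ∧ B ∉ I ∧
      ∀ C : Set N, C ∩ B ∉ I → A ∩ f ⁻¹' C ∉ J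

/-- The `BW(I)` property of a topological space `X`, for an ideal `I` on `M`:
every sequence `(x_m)_{m ∈ M}` in `X` admits an `I`-positive set `A` on which it is
`I`-convergent to some point. -/
def BWProp {M : Type*} (I : Set (Set M)) (X : Type*) [TopologicalSpace X] : Prop :=
  ∀ x : M → X, ∃ A : Set M, A ∉ I ∧ ∃ p : X,
    ∀ U : Set X, IsOpen U → p ∈ U → {n ∈ A | x n ∉ U} ∈ I

/-- The ideal `Fin` of finite subsets of `ω`. -/
def FinIdeal : Set (Set ℕ) := {A : Set ℕ | A.Finite}

theorem stmt0 (I J : Set (Set ℕ)) (hI : IsIdeal I) (hJ : IsIdeal J)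
    (hBW : BWle I J) (X : Type*) [TopologicalSpace X] (hX : BWProp J X) :
    BWProp I X := by
  obtain ⟨f, hf⟩ := hBW
  intro x
  obtain ⟨A, hA, p, hp⟩ := hX (x ∘ f)
  obtain ⟨B, hBA, hB, hprop⟩ := hf A hA
  refine ⟨B, hB, p, fun U hU hpU => ?_⟩
  by_contra h
  have heq : {n : ℕ | x n ∉ U} ∩ B = {n ∈ B | x n ∉ U} := by
    ext n; simp [Set.mem_inter_iff, and_comm]
  have hCB : {n : ℕ | x n ∉ U} ∩ B ∉ I := by rw [heq]; exact h
  have := hprop _ hCB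
  apply this
  apply hJ.mem_of_subset _ (hp U hU hpU)
  intro m hm
  exact ⟨hm.1, hm.2⟩
end

section
/- The relation ≤_BW is transitive: if I, J, K are ideals on countable sets with I ≤_BW J and J ≤_BW K, then I ≤_BW K. -/
open Set Filter Topology

theorem stmt1 {M N P : Type*} [Countable M] [Countable N] [Countable P]
    (I : Set (Set M)) (J : Set (Set N)) (K : Set (Set P))
    (hI : IsIdeal I) (hJ : IsIdeal J) (hK : IsIdeal K)
    (hIJ : BWle I J) (hJK : BWle J K) : BWle I K := by
  obtain ⟨f, hf⟩ := hIJ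
  obtain ⟨g, hg⟩ := hJK
  refine ⟨f ∘ g, fun A hA => ?_⟩
  obtain ⟨B, hBsub, hBpos, hB⟩ := hg A hA
  obtain ⟨B', hB'sub, hB'pos, hB'⟩ := hf B hBpos
  refine ⟨B', ?_, hB'pos, fun C hC => ?_⟩
  · calc B' ⊆ f '' B := hB'sub
      _ ⊆ f '' (g '' A) := Set.image_mono hBsub
      _ = (f ∘ g) '' A := (Set.image_comp f g A).symm
  · have h2 := hB' C hC
    rw [Set.inter_comm] at h2
    have := hB (f ⁻¹' C) h2
    simpa [Set.preimage_comp] using this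
end

section
/- Let I, J, K be ideals on countable sets. If K ≤_BW I and K ≤_BW J, then K ≤_BW I ⊕ J. -/
open Set Filter Topology

/-- The direct sum `I ⊕ J` of ideals, an ideal on the disjoint union. -/
def idealSum {M N : Type*} (I : Set (Set M)) (J : Set (Set N)) : Set (Set (M ⊕ N)) :=
  {A | Sum.inl ⁻¹' A ∈ I ∧ Sum.inr ⁻¹' A ∈ J}

theorem stmt5 {M N P : Type*} [Countable M] [Countable N] [Countable P]
    (I : Set (Set M)) (J : Set (Set N)) (K : Set (Set P))
    (hI : IsIdeal I) (hJ : IsIdeal J) (hK : IsIdeal K)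
    (hKI : BWle K I) (hKJ : BWle K J) : BWle K (idealSum I J) := by
  obtain ⟨f, hf⟩ := hKI
  obtain ⟨g, hg⟩ := hKJ
  refine ⟨Sum.elim f g, fun A hA => ?_⟩
  by_cases h1 : Sum.inl ⁻¹' A ∈ I
  · have h2 : Sum.inr ⁻¹' A ∉ J := fun h2 => hA ⟨h1, h2⟩
    obtain ⟨B, hB1, hB2, hB3⟩ := hg _ h2
    refine ⟨B, ?_, hB2, fun C hC hmem => hB3 C hC ?_⟩
    · intro p hp
      obtain ⟨n, hn, rfl⟩ := hB1 hp
      exact ⟨Sum.inr n, hn, rfl⟩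
    · have : Sum.inr ⁻¹' (A ∩ Sum.elim f g ⁻¹' C) = Sum.inr ⁻¹' A ∩ g ⁻¹' C := rfl
      exact this ▸ hmem.2
  · obtain ⟨B, hB1, hB2, hB3⟩ := hf _ h1
    refine ⟨B, ?_, hB2, fun C hC hmem => hB3 C hC ?_⟩
    · intro p hp
      obtain ⟨n, hn, rfl⟩ := hB1 hp
      exact ⟨Sum.inl n, hn, rfl⟩
    · exact hmem.1
end

section
/- Let I be an ideal on ω. Then I ≤_BW Fin if and only if I is not tall. -/
open Set Filter Topology

/-- An ideal on `ω` is tall if every infinite set has an infinite subset in the ideal. -/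
def IsTall (I : Set (Set ℕ)) : Prop :=
  ∀ A : Set ℕ, A.Infinite → ∃ B ⊆ A, B.Infinite ∧ B ∈ I

theorem stmt6 (I : Set (Set ℕ)) (hI : IsIdeal I) :
    BWle I FinIdeal ↔ ¬ IsTall I := by
  constructor
  · rintro ⟨f, hf⟩ htall
    -- apply to univ
    obtain ⟨B, hBsub, hBI, -⟩ := hf Set.univ (by
      simpa [FinIdeal] using Set.infinite_univ)
    have hBinf : B.Infinite := fun hfin => hBI (hI.finite_mem hfin)
    obtain ⟨D, hDB, hDinf, hDI⟩ := htall B hBinf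
    have hDrange : D ⊆ Set.range f := by
      intro x hx
      rcases hBsub (hDB hx) with ⟨n, -, rfl⟩
      exact ⟨n, rfl⟩
    have hpre : (f ⁻¹' D).Infinite := by
      intro hfin
      have : (f '' (f ⁻¹' D)).Finite := hfin.image f
      rw [Set.image_preimage_eq_inter_range, Set.inter_eq_self_of_subset_left hDrange] at this
      exact hDinf this
    obtain ⟨B', hB'sub, hB'I, -⟩ := hf (f ⁻¹' D) (by simpa [FinIdeal] using hpre)
    have : B' ⊆ D := by
      intro x hx
      rcases hB'sub hx with ⟨n, hn, rfl⟩
      exact hn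
    exact hB'I (hI.mem_of_subset this hDI)
  · intro htall
    rw [IsTall] at htall
    push_neg at htall
    obtain ⟨A, hAinf, hA⟩ := htall
    let e := hAinf.natEmbedding
    set f : ℕ → ℕ := fun n => (e n : ℕ) with hfdef
    have hfA : ∀ n, f n ∈ A := fun n => (e n).2
    have hfinj : Function.Injective f := fun a b h => e.injective (Subtype.ext h)
    refine ⟨f, fun A' hA' => ?_⟩
    have hA'inf : A'.Infinite := hA'
    refine ⟨f '' A', le_refl _, ?_, ?_⟩
    · have himg : (f '' A').Infinite := hA'inf.image (hfinj.injOn)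
      intro hmem
      rcases hA (f '' A') (fun x ⟨n, _, h⟩ => h ▸ hfA n) with h
      exact h himg hmem
    · intro C hC hfin
      have hCBinf : (C ∩ f '' A').Infinite := fun h => hC (hI.finite_mem h)
      have hsub : C ∩ f '' A' ⊆ f '' (A' ∩ f ⁻¹' C) := by
        rintro x ⟨hxC, n, hn, rfl⟩
        exact ⟨n, ⟨hn, hxC⟩, rfl⟩
      have : (f '' (A' ∩ f ⁻¹' C)).Finite := (hfin : (A' ∩ f ⁻¹' C).Finite).image f
      exact hCBinf (this.subset hsub)
end

section
/- Let I be a nowhere tall ideal on ω. Then Fin ≤_BW I and I ≤_BW Fin; consequently, a topological space has the BW(I) property if and only if it is sequentially compact. -/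
open Set Filter Topology

/-- An ideal on `ω` is nowhere tall if every `I`-positive set `A` has an infinite
subset `B` no infinite subset of which belongs to `I`. -/
def IsNowhereTall (I : Set (Set ℕ)) : Prop :=
  ∀ A : Set ℕ, A ∉ I → ∃ B ⊆ A, B.Infinite ∧ ∀ C ⊆ B, C.Infinite → C ∉ I

theorem stmt7 (I : Set (Set ℕ)) (hI : IsIdeal I) (h : IsNowhereTall I) :
    BWle FinIdeal I ∧ BWle I FinIdeal ∧
      ∀ (X : Type*) [TopologicalSpace X], (BWProp I X ↔ SeqCompactSpace X) := by
  classical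
  have hInfOfPos : ∀ {A : Set ℕ}, A ∉ I → A.Infinite := by
    intro A hA hf
    exact hA (hI.finite_mem hf)
  -- the fixed positive set D from nowhere tallness applied to univ
  obtain ⟨D, -, hDinf, hD⟩ := h Set.univ hI.univ_not_mem
  haveI : Infinite D := hDinf.to_subtype
  set e : ℕ ↪o ℕ := Nat.orderEmbeddingOfSet D with he
  have heD : Set.range e = D := Nat.orderEmbeddingOfSet_range D
  refine ⟨?_, ?_, ?_⟩
  · -- Fin ≤_BW I via identity
    refine ⟨id, fun A hA => ?_⟩
    obtain ⟨B, hBA, hBinf, hB⟩ := h A hA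
    refine ⟨B, by simpa using hBA, hBinf, fun C hC => ?_⟩
    have hCBinf : (C ∩ B).Infinite := hC
    have hCBpos : C ∩ B ∉ I := hB _ Set.inter_subset_right hCBinf
    intro hmem
    exact hCBpos (hI.mem_of_subset (fun n hn => Set.mem_inter (hBA hn.2) hn.1) hmem)
  · -- I ≤_BW Fin via enumeration of D
    refine ⟨e, fun A hA => ?_⟩
    have hAinf : A.Infinite := fun hf => hA hf
    refine ⟨e '' A, subset_rfl, ?_, fun C hC => ?_⟩
    · exact hD _ (by rw [← heD]; exact Set.image_subset_range _ _)
        (hAinf.image (e.injective.injOn))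
    · have hCBinf : (C ∩ (e '' A)).Infinite := hInfOfPos hC
      intro hfin
      have : (C ∩ (e '' A)) ⊆ e '' (A ∩ e ⁻¹' C) := by
        rintro n ⟨hnC, m, hmA, rfl⟩
        exact ⟨m, ⟨hmA, hnC⟩, rfl⟩
      exact hCBinf (((hfin : (A ∩ e ⁻¹' C).Finite).image e).subset this)
  · intro X _
    constructor
    · -- BWProp → SeqCompact
      intro hBW
      refine ⟨fun {x} _ => ?_⟩
      obtain ⟨A, hA, p, hp⟩ := hBW x
      obtain ⟨B, hBA, hBinf, hB⟩ := h A hA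
      haveI : Infinite B := hBinf.to_subtype
      set φ : ℕ ↪o ℕ := Nat.orderEmbeddingOfSet B with hφ
      have hφB : ∀ k, φ k ∈ B := fun k => by
        rw [← Nat.orderEmbeddingOfSet_range B]; exact ⟨k, rfl⟩
      refine ⟨p, Set.mem_univ p, φ, φ.strictMono, tendsto_nhds.mpr fun U hU hpU => ?_⟩
      have hbadI : {n ∈ B | x n ∉ U} ∈ I :=
        hI.mem_of_subset (fun n hn => Set.mem_sep (hBA hn.1) hn.2) (hp U hU hpU)
      have hbadfin : {n ∈ B | x n ∉ U}.Finite := by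
        by_contra hf
        exact hB _ (Set.sep_subset _ _) hf hbadI
      obtain ⟨N, hN⟩ := hbadfin.bddAbove
      refine eventually_atTop.mpr ⟨N + 1, fun k hk => ?_⟩
      by_contra hx
      have h1 : φ k ≤ N := hN (Set.mem_sep (hφB k) hx)
      have h2 : k ≤ φ k := φ.strictMono.le_apply
      omega
    · -- SeqCompact → BWProp
      intro hSC x
      obtain ⟨p, φ, hφ, htd⟩ := SeqCompactSpace.tendsto_subseq (x ∘ e)
      refine ⟨Set.range (e ∘ φ), ?_, p, fun U hU hpU => ?_⟩
      · refine hD _ ?_ (Set.infinite_range_of_injective (e.injective.comp hφ.injective))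
        rintro n ⟨k, rfl⟩
        rw [← heD]; exact ⟨φ k, rfl⟩
      · have hfin : {k : ℕ | (x ∘ e) (φ k) ∉ U}.Finite := by
          rw [← Nat.cofinite_eq_atTop] at htd
          exact htd (hU.mem_nhds hpU)
        refine hI.finite_mem (((hfin.image (e ∘ φ)).subset ?_))
        rintro n ⟨⟨k, rfl⟩, hn⟩
        exact ⟨k, hn, rfl⟩
end

section
/- Fin ≤_BW W, where W is the van der Waerden ideal. -/
open Set Filter Topology

/-- `A` contains an arithmetic progression of length `n` (with common difference `d ≥ 1`). -/
def HasAPOfLength (A : Set ℕ) (n : ℕ) : Prop :=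
  ∃ a d : ℕ, 1 ≤ d ∧ ∀ i < n, a + i * d ∈ A

/-- The van der Waerden ideal `W`: sets not containing arbitrarily long arithmetic
progressions. -/
def vdWIdeal : Set (Set ℕ) := {A : Set ℕ | ∃ n : ℕ, ¬ HasAPOfLength A n}

section VdWAux
lemma ap_mono {A : Set ℕ} {m n : ℕ} (h : HasAPOfLength A n) (hm : m ≤ n) :
    HasAPOfLength A m := by
  obtain ⟨a, d, hd, hA⟩ := h
  exact ⟨a, d, hd, fun i hi => hA i (lt_of_lt_of_le hi hm)⟩

lemma ap_subset {A B : Set ℕ} {n : ℕ} (h : HasAPOfLength A n) (hAB : A ⊆ B) :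
    HasAPOfLength B n := by
  obtain ⟨a, d, hd, hA⟩ := h
  exact ⟨a, d, hd, fun i hi => hAB (hA i hi)⟩

lemma core (A : Set ℕ) (n : ℕ) (hn : 1 ≤ n) (h : HasAPOfLength A (4 * n + 1)) :
    ∃ k, HasAPOfLength {x | x ∈ A ∧ Nat.log 2 x = k} n := by
  obtain ⟨a, d, hd, hA⟩ := h
  set t := a + 4 * n * d with ht
  have key : a + 4 * (n * d) = t := by rw [ht]; ring
  have h4 : 4 ≤ 4 * (n * d) := by
    have h1 : 1 ≤ n * d := Nat.mul_le_mul hn hd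
    omega
  have ht4 : 4 ≤ t := by omega
  have hk1 : 2 ^ Nat.log 2 t ≤ t := Nat.pow_log_le_self 2 (by omega)
  have hk2 : t < 2 ^ (Nat.log 2 t + 1) := Nat.lt_pow_succ_log_self (by norm_num) t
  have hkpos : 1 ≤ Nat.log 2 t := by
    rw [Nat.le_log_iff_pow_le (by norm_num) (by omega)]; omega
  obtain ⟨k', hk'⟩ : ∃ k', Nat.log 2 t = k' + 1 := ⟨Nat.log 2 t - 1, by omega⟩
  rw [hk'] at hk1 hk2
  -- useful mul facts
  have hndlt : n * d < 2 ^ k' := by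
    have h1 : 4 * (n * d) ≤ t := by omega
    have h2 : (2:ℕ) ^ (k' + 1 + 1) = 4 * 2 ^ k' := by ring
    omega
  by_cases hcase1 : 2 ^ (k' + 1) ≤ a
  · -- whole AP inside level k'+1
    refine ⟨k' + 1, a, d, hd, fun i hi => ⟨hA i (by omega), ?_⟩⟩
    have hub : a + i * d ≤ t := by
      have : i * d ≤ 4 * n * d := Nat.mul_le_mul_right d (by omega)
      omega
    exact Nat.log_eq_of_pow_le_of_lt_pow (by omega) (by omega)
  · push_neg at hcase1
    by_cases hcase2 : 2 ^ k' ≤ a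
    · -- AP inside levels k' and k'+1
      have hex : ∃ i, 2 ^ (k' + 1) ≤ a + i * d := ⟨4 * n, by omega⟩
      obtain ⟨i1, hspec, hmin⟩ : ∃ i1, 2 ^ (k' + 1) ≤ a + i1 * d ∧
          ∀ j < i1, a + j * d < 2 ^ (k' + 1) :=
        ⟨Nat.find hex, Nat.find_spec hex, fun j hj => lt_of_not_ge (Nat.find_min hex hj)⟩
      have hi1le : i1 ≤ 4 * n := by
        by_contra hcon
        exact absurd (hmin (4 * n) (by omega)) (by omega)
      by_cases hsplit : n ≤ i1
      · -- first n terms all in level k'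
        refine ⟨k', a, d, hd, fun i hi => ⟨hA i (by omega), ?_⟩⟩
        have hub : a + i * d < 2 ^ (k' + 1) := hmin i (by omega)
        exact Nat.log_eq_of_pow_le_of_lt_pow (by omega) (by omega)
      · -- terms i1 .. i1+n-1 all in level k'+1
        push_neg at hsplit
        refine ⟨k' + 1, a + i1 * d, d, hd, fun i hi => ?_⟩
        have heq : a + i1 * d + i * d = a + (i1 + i) * d := by ring
        have hsplitmul : (i1 + i) * d = i1 * d + i * d := by ring
        have hmem : a + (i1 + i) * d ∈ A := hA (i1 + i) (by omega)
        have hub : a + (i1 + i) * d ≤ t := by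
          have : (i1 + i) * d ≤ 4 * n * d := Nat.mul_le_mul_right d (by omega)
          omega
        refine ⟨by rwa [heq], ?_⟩
        rw [heq]
        exact Nat.log_eq_of_pow_le_of_lt_pow (by omega) (by omega)
    · -- a below 2^k' : find entry point into level k'
      push_neg at hcase2
      have hex : ∃ i, 2 ^ k' ≤ a + i * d := ⟨4 * n, by omega⟩
      obtain ⟨i0, hspec, hmin⟩ : ∃ i0, 2 ^ k' ≤ a + i0 * d ∧
          ∀ j < i0, a + j * d < 2 ^ k' :=
        ⟨Nat.find hex, Nat.find_spec hex, fun j hj => lt_of_not_ge (Nat.find_min hex hj)⟩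
      have hi0pos : 1 ≤ i0 := by
        rcases Nat.eq_zero_or_pos i0 with h0 | h0
        · rw [h0] at hspec; simp at hspec; omega
        · exact h0
      have hprev : a + (i0 - 1) * d < 2 ^ k' := hmin _ (by omega)
      have hupper0 : a + i0 * d < 2 ^ k' + d := by
        have : i0 * d = (i0 - 1) * d + d := by
          have : i0 = (i0 - 1) + 1 := by omega
          nth_rewrite 1 [this]; ring
        omega
      refine ⟨k', a + i0 * d, d, hd, fun i hi => ?_⟩
      have heq : a + i0 * d + i * d = a + (i0 + i) * d := by ring
      have hsplitmul : (i0 + i) * d = i0 * d + i * d := by ring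
      have hub : a + (i0 + i) * d < 2 ^ (k' + 1) := by
        have h1 : (i0 + i) * d = i0 * d + i * d := by ring
        have h2 : i * d + d ≤ n * d := by
          have ha : (i + 1) * d = i * d + d := by ring
          have hb : (i + 1) * d ≤ n * d := Nat.mul_le_mul_right d (by omega)
          omega
        have h3 : (2:ℕ) ^ (k' + 1) = 2 ^ k' + 2 ^ k' := by ring
        omega
      have hidx : i0 + i ≤ 4 * n := by
        have h1 : a + (i0 + i) * d < t := by omega
        have h2 : (i0 + i) * d < 4 * n * d := by omega
        by_contra hcon
        exact absurd (Nat.mul_le_mul_right d (by omega : 4 * n ≤ i0 + i)) (by omega)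
      have hmem : a + (i0 + i) * d ∈ A := hA (i0 + i) (by omega)
      refine ⟨by rwa [heq], ?_⟩
      rw [heq]
      exact Nat.log_eq_of_pow_le_of_lt_pow (by omega) (by omega)

lemma exists_level (A : Set ℕ) (hA : ∀ n, HasAPOfLength A n) (K m : ℕ) :
    ∃ k, K < k ∧ HasAPOfLength {x | x ∈ A ∧ Nat.log 2 x = k} (m + 1) := by
  have h' : ∀ n, HasAPOfLength {x | x ∈ A ∧ 2 ^ (K + 1) ≤ x} n := by
    intro n
    obtain ⟨a, d, hd, hAP⟩ := hA (n + 2 ^ (K + 1))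
    refine ⟨a + 2 ^ (K + 1) * d, d, hd, fun i hi => ?_⟩
    have heq : a + 2 ^ (K + 1) * d + i * d = a + (2 ^ (K + 1) + i) * d := by ring
    have hmem := hAP (2 ^ (K + 1) + i) (by omega)
    rw [heq]
    refine ⟨hmem, ?_⟩
    have h1 : 2 ^ (K + 1) * 1 ≤ 2 ^ (K + 1) * d := Nat.mul_le_mul_left _ hd
    omega
  obtain ⟨k, hk⟩ := core _ (m + 1) (by omega) (h' (4 * (m + 1) + 1))
  refine ⟨k, ?_, ap_subset hk (fun x hx => ⟨hx.1.1, hx.2⟩)⟩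
  obtain ⟨a, d, hd, h⟩ := hk
  obtain ⟨⟨haA, ha2⟩, halog⟩ := h 0 (by omega)
  have ha0 : a + 0 * d = a := by ring
  rw [ha0] at ha2 halog
  have hane : a ≠ 0 := by
    intro h0
    rw [h0] at ha2
    simp at ha2
  have : K + 1 ≤ Nat.log 2 a := (Nat.le_log_iff_pow_le (by norm_num) hane).mpr ha2
  omega

theorem stmt8 : BWle FinIdeal vdWIdeal := by
  refine ⟨Nat.log 2, fun A hA => ?_⟩
  have hA' : ∀ n, HasAPOfLength A n := by
    intro n
    by_contra hcon
    exact hA ⟨n, hcon⟩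
  choose g hg1 hg2 using exists_level A hA'
  let seq : ℕ → ℕ := fun m => Nat.rec (g 0 0) (fun m prev => g prev (m + 1)) m
  have hmono : StrictMono seq := strictMono_nat_of_lt_succ (fun m => hg1 (seq m) (m + 1))
  have hap : ∀ m, HasAPOfLength {x | x ∈ A ∧ Nat.log 2 x = seq m} (m + 1) := by
    intro m
    cases m with
    | zero => exact hg2 0 0
    | succ m => exact hg2 (seq m) (m + 1)
  refine ⟨Set.range seq, ?_, ?_, ?_⟩
  · rintro _ ⟨m, rfl⟩
    obtain ⟨a, d, hd, h⟩ := hap m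
    obtain ⟨haA, halog⟩ := h 0 (by omega)
    have ha0 : a + 0 * d = a := by ring
    rw [ha0] at haA halog
    exact ⟨a, haA, halog⟩
  · exact fun hB => (Set.infinite_range_of_injective hmono.injective) hB
  · intro C hC hmem
    obtain ⟨n, hn⟩ := hmem
    have hCinf : (C ∩ Set.range seq).Infinite := hC
    have hinf : (seq ⁻¹' (C ∩ Set.range seq)).Infinite :=
      hCinf.preimage (fun x hx => hx.2)
    obtain ⟨m, hm, hmn⟩ := hinf.exists_gt n
    refine hn (ap_mono (ap_subset (hap m) ?_) (by omega))
    intro x hx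
    exact ⟨hx.1, by simp only [Set.mem_preimage]; rw [hx.2]; exact hm.1⟩

end VdWAux
end

section
/- Let (μ_n)_{n∈ω} be a sequence of lower semicontinuous submeasures on ω and (I_n)_{n∈ω} a sequence of pairwise disjoint finite subsets of ω, and suppose that I = {A ⊆ ω : lim_{n→∞} μ_n(A ∩ I_n) = 0} is a proper ideal (ω ∉ I). Then Fin ≤_BW I. -/
open Set Filter Topology

/-- A lower semicontinuous submeasure on `ω`. -/
structure IsLSCSubmeasure (μ : Set ℕ → ENNReal) : Prop where
  empty : μ ∅ = 0
  singleton_lt_top : ∀ n : ℕ, μ {n} < ⊤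
  mono_union : ∀ A B : Set ℕ, μ A ≤ μ (A ∪ B)
  subadd : ∀ A B : Set ℕ, μ (A ∪ B) ≤ μ A + μ B
  lsc : ∀ A : Set ℕ,
    Filter.Tendsto (fun n : ℕ => μ (A ∩ Set.Iio n)) Filter.atTop (nhds (μ A))

theorem stmt9 (μ : ℕ → Set ℕ → ENNReal) (hμ : ∀ n, IsLSCSubmeasure (μ n))
    (In : ℕ → Set ℕ) (hfin : ∀ n, (In n).Finite)
    (hdisj : ∀ m n, m ≠ n → Disjoint (In m) (In n))
    (I : Set (Set ℕ))
    (hIdef : I = {A : Set ℕ |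
      Filter.Tendsto (fun n : ℕ => μ n (A ∩ In n)) Filter.atTop (nhds 0)})
    (hproper : (Set.univ : Set ℕ) ∉ I) :
    BWle FinIdeal I := by
  classical
  have mono : ∀ n (A B : Set ℕ), A ⊆ B → μ n A ≤ μ n B := by
    intro n A B h
    have := (hμ n).mono_union A B
    rwa [Set.union_eq_self_of_subset_left h] at this
  set f : ℕ → ℕ := fun k => if h : ∃ n, k ∈ In n then h.choose else 0 with hf
  have hfk : ∀ n k, k ∈ In n → f k = n := by
    intro n k hk
    have h : ∃ m, k ∈ In m := ⟨n, hk⟩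
    simp only [hf, dif_pos h]
    by_contra hne
    exact (hdisj _ _ hne).ne_of_mem h.choose_spec hk rfl
  refine ⟨f, ?_⟩
  intro A hA
  rw [hIdef] at hA
  simp only [Set.mem_setOf_eq] at hA
  rw [ENNReal.nhds_zero_basis.tendsto_right_iff] at hA
  push_neg at hA
  obtain ⟨ε, hε, hfreq⟩ := hA
  set S : Set ℕ := {n | ε ≤ μ n (A ∩ In n)} with hS
  have hSinf : S.Infinite := by
    rw [← Nat.frequently_atTop_iff_infinite]
    refine hfreq.mono fun n hn => ?_
    simpa [Set.mem_Iio, not_lt] using hn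
  refine ⟨S, ?_, ?_, ?_⟩
  · intro n hn
    have hne : (A ∩ In n).Nonempty := by
      rcases Set.eq_empty_or_nonempty (A ∩ In n) with h | h
      · exfalso
        have := hn
        rw [hS, Set.mem_setOf_eq, h, (hμ n).empty] at this
        exact (lt_irrefl 0 (lt_of_lt_of_le hε this))
      · exact h
    obtain ⟨k, hkA, hkI⟩ := hne
    exact ⟨k, hkA, hfk n k hkI⟩
  · exact fun h => hSinf h
  · intro C hC htend
    rw [hIdef, Set.mem_setOf_eq] at htend
    have hCS : (C ∩ S).Infinite := fun h => hC h
    have hev := (ENNReal.nhds_zero_basis.tendsto_right_iff.mp htend) ε hε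
    rw [Filter.eventually_atTop] at hev
    obtain ⟨N, hN⟩ := hev
    obtain ⟨n, hnCS, hnN⟩ := hCS.exists_gt N
    have hsub : A ∩ In n ⊆ (A ∩ f ⁻¹' C) ∩ In n := by
      rintro k ⟨hkA, hkI⟩
      exact ⟨⟨hkA, by rw [Set.mem_preimage, hfk n k hkI]; exact hnCS.1⟩, hkI⟩
    have h1 : ε ≤ μ n ((A ∩ f ⁻¹' C) ∩ In n) := le_trans hnCS.2 (mono n _ _ hsub)
    have h2 := hN n hnN.le
    rw [Set.mem_Iio] at h2
    exact absurd h1 (not_le.mpr h2)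
end

section
/- Every topological space with the BW(W) property, where W is the van der Waerden ideal, is sequentially compact. -/
open Set Filter Topology

/-- Key combinatorial lemma: if `A` contains arithmetic progressions of every length,
then for all `m` and `K` there is a block `[3^k, 3^(k+1))` with `k > K` in which `A`
contains an `m`-term arithmetic progression.  Indeed, any sufficiently long AP whose
maximum is large either lies in at most two consecutive blocks (one of which then
receives at least `m` consecutive terms), or its span contains a whole block of
proportional size, which also captures `m` consecutive terms. -/
lemma exists_color (A : Set ℕ) (hA : ∀ n, HasAPOfLength A n) (m K : ℕ) :
    ∃ k, K < k ∧ HasAPOfLength {n ∈ A | Nat.log 3 n = k} m := by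
  classical
  set L : ℕ := 3 ^ (K + 3) + 9 * m + 10 with hLdef
  obtain ⟨a, d, hd, hap⟩ := hA (L + 1)
  set E : ℕ := a + L * d with hEdef
  have hdL : L ≤ L * d := by
    calc L = L * 1 := (mul_one L).symm
    _ ≤ L * d := Nat.mul_le_mul_left L hd
  have hpowpos : 1 ≤ 3 ^ (K + 3) := Nat.one_le_pow _ _ (by norm_num)
  have hE3 : 3 ^ (K + 3) ≤ E := by
    have h1 : 3 ^ (K + 3) ≤ L := by omega
    omega
  have hE0 : E ≠ 0 := by omega
  have hklow : K + 3 ≤ Nat.log 3 E :=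
    (Nat.le_log_iff_pow_le (by norm_num) hE0).mpr hE3
  obtain ⟨t, ht⟩ : ∃ t, Nat.log 3 E = t + 1 := ⟨Nat.log 3 E - 1, by omega⟩
  have h1 : 3 ^ (t + 1) ≤ E := by
    have := Nat.pow_log_le_self 3 hE0
    rwa [ht] at this
  have h2 : E < 3 ^ (t + 2) := by
    have := Nat.lt_pow_succ_log_self (show 1 < 3 by norm_num) E
    rwa [ht] at this
  have hKt : K + 2 ≤ t := by omega
  have hP : (0 : ℕ) < 3 ^ t := pow_pos (by norm_num) t
  have hpow1 : (3 : ℕ) ^ (t + 1) = 3 * 3 ^ t := by ring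
  have hpow2 : (3 : ℕ) ^ (t + 2) = 9 * 3 ^ t := by ring
  have hmd : (m + 1) * d < 3 ^ t := by
    have h3 : (9 * m + 9) * d ≤ L * d := Nat.mul_le_mul_right d (by omega)
    have h5 : 9 * ((m + 1) * d) < 9 * 3 ^ t := by
      have he : 9 * ((m + 1) * d) = (9 * m + 9) * d := by ring
      omega
    exact Nat.lt_of_mul_lt_mul_left h5
  by_cases hca : a < 3 ^ t
  · -- the span contains the full block [3^t, 3^(t+1)); color t
    have hwit : ∃ i, 3 ^ t ≤ a + i * d := by
      refine ⟨L, ?_⟩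
      have : (3:ℕ) ^ t ≤ 3 ^ (t + 1) := Nat.pow_le_pow_right (by norm_num) (by omega)
      omega
    set c := Nat.find hwit with hc
    have hcspec : 3 ^ t ≤ a + c * d := Nat.find_spec hwit
    have hcup : a + c * d < 3 ^ t + d := by
      rcases Nat.eq_zero_or_pos c with h0 | h0
      · rw [h0]; simp; omega
      · obtain ⟨c', hc'⟩ : ∃ c', c = c' + 1 := ⟨c - 1, by omega⟩
        have hmin : ¬ (3 ^ t ≤ a + c' * d) := by
          have : c' < c := by omega
          exact Nat.find_min hwit this
        have he : a + (c' + 1) * d = (a + c' * d) + d := by ring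
        rw [hc', he]; omega
    refine ⟨t, by omega, a + c * d, d, hd, ?_⟩
    intro j hj
    have hvj : (a + c * d) + j * d = a + (c + j) * d := by ring
    have hjd : (j + 1) * d ≤ (m + 1) * d := Nat.mul_le_mul_right d (by omega)
    have hdd : d + j * d = (j + 1) * d := by ring
    have hupj : a + (c + j) * d < 3 ^ (t + 1) := by omega
    have hlowj : 3 ^ t ≤ a + (c + j) * d := by omega
    have hidx : c + j < L + 1 := by
      by_contra hcon
      have : L ≤ c + j := by omega
      have := Nat.mul_le_mul_right d this
      omega
    rw [hvj]
    exact ⟨hap _ hidx, Nat.log_eq_of_pow_le_of_lt_pow hlowj hupj⟩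
  · -- a ≥ 3^t : the whole AP lives in at most two blocks
    push_neg at hca
    have hwit : ∃ i, 3 ^ (t + 1) ≤ a + i * d := ⟨L, by omega⟩
    set c := Nat.find hwit with hc
    have hcL : c ≤ L := Nat.find_min' hwit (by omega)
    by_cases hmc : m ≤ c
    · -- the first m terms all lie in block t
      refine ⟨t, by omega, a, d, hd, ?_⟩
      intro j hj
      have hjc : j < c := lt_of_lt_of_le hj hmc
      have hup : ¬ (3 ^ (t + 1) ≤ a + j * d) := Nat.find_min hwit hjc
      have hlow : 3 ^ t ≤ a + j * d := le_trans hca (by omega)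
      exact ⟨hap j (by omega), Nat.log_eq_of_pow_le_of_lt_pow hlow (by omega)⟩
    · -- the m terms starting at index c all lie in block t+1
      push_neg at hmc
      refine ⟨t + 1, by omega, a + c * d, d, hd, ?_⟩
      intro j hj
      have hvj : (a + c * d) + j * d = a + (c + j) * d := by ring
      have hcspec : 3 ^ (t + 1) ≤ a + c * d := Nat.find_spec hwit
      have hidx : c + j ≤ L := by omega
      have hmul : (c + j) * d ≤ L * d := Nat.mul_le_mul_right d hidx
      have hce : (c + j) * d = c * d + j * d := by ring
      have hlow : 3 ^ (t + 1) ≤ a + (c + j) * d := by omega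
      have hup : a + (c + j) * d < 3 ^ (t + 1 + 1) := by
        have : (t + 1) + 1 = t + 2 := rfl
        rw [this]; omega
      rw [hvj]
      exact ⟨hap _ (by omega), Nat.log_eq_of_pow_le_of_lt_pow hlow hup⟩

theorem stmt10 (X : Type*) [TopologicalSpace X] (h : BWProp vdWIdeal X) :
    SeqCompactSpace X := by
  constructor
  intro x _
  obtain ⟨A, hA, p, hp⟩ := h (fun n => x (Nat.log 3 n))
  have hA' : ∀ n, HasAPOfLength A n := by
    simp only [vdWIdeal, Set.mem_setOf_eq, not_exists, not_not] at hA
    exact hA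
  choose F hF1 hF2 using fun m K => exists_color A hA' m K
  let k : ℕ → ℕ := fun j => Nat.rec (F 0 0) (fun j ih => F (j + 1) ih) j
  have hksucc : ∀ j, k (j + 1) = F (j + 1) (k j) := fun j => rfl
  have hmono : StrictMono k := strictMono_nat_of_lt_succ fun j => by
    rw [hksucc]; exact hF1 (j + 1) (k j)
  have hQ : ∀ j, HasAPOfLength {n ∈ A | Nat.log 3 n = k j} j := by
    intro j
    cases j with
    | zero => exact hF2 0 0
    | succ j => rw [hksucc]; exact hF2 (j + 1) (k j)
  refine ⟨p, Set.mem_univ p, k, hmono, ?_⟩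
  rw [tendsto_nhds]
  intro U hU hpU
  have hW := hp U hU hpU
  simp only [vdWIdeal, Set.mem_setOf_eq] at hW
  obtain ⟨n₀, hn₀⟩ := hW
  refine Filter.mem_atTop_sets.mpr ⟨n₀, fun j hj => ?_⟩
  simp only [Set.mem_preimage, Function.comp_apply]
  by_contra hxU
  apply hn₀
  obtain ⟨b, dd, hdd, hb⟩ := hQ j
  refine ⟨b, dd, hdd, fun i hi => ?_⟩
  obtain ⟨hbA, hblog⟩ := hb i (lt_of_lt_of_le hi hj)
  exact ⟨hbA, by simp only [hblog]; exact hxU⟩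
end

section
/- Assume the continuum hypothesis. Then there exists a Hausdorff topological space that is sequentially compact and not compact and does not have the BW(W) property, where W is the van der Waerden ideal. -/
open Set Filter Topology

namespace Stmt11

open Cardinal

abbrev OT : Type := (Cardinal.aleph 1).ord.ToType

-- ==== from w1.lean ====


lemma hasAP_mono {A B : Set ℕ} (h : A ⊆ B) {n : ℕ} (hA : HasAPOfLength A n) :
    HasAPOfLength B n := by
  obtain ⟨a, d, hd, hi⟩ := hA
  exact ⟨a, d, hd, fun i hin => h (hi i hin)⟩

lemma hasAP_anti {A : Set ℕ} {m n : ℕ} (hmn : m ≤ n) (h : HasAPOfLength A n) :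
    HasAPOfLength A m := by
  obtain ⟨a, d, hd, hi⟩ := h
  exact ⟨a, d, hd, fun i him => hi i (lt_of_lt_of_le him hmn)⟩

lemma not_mem_vdW_iff {A : Set ℕ} : A ∉ vdWIdeal ↔ ∀ n, HasAPOfLength A n := by
  simp [vdWIdeal]

lemma vdW_subset {A B : Set ℕ} (h : A ⊆ B) (hB : B ∈ vdWIdeal) : A ∈ vdWIdeal := by
  obtain ⟨n, hn⟩ := hB
  exact ⟨n, fun hA => hn (hasAP_mono h hA)⟩

lemma finite_mem_vdW {A : Set ℕ} (h : A.Finite) : A ∈ vdWIdeal := by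
  refine ⟨h.toFinset.card + 1, fun hAP => ?_⟩
  obtain ⟨a, d, hd, hi⟩ := hAP
  have hinj : Set.InjOn (fun i => a + i * d) ↑(Finset.range (h.toFinset.card + 1)) := by
    intro i _ j _ hij
    simp only at hij
    have : i * d = j * d := by omega
    exact Nat.eq_of_mul_eq_mul_right hd this
  have hmaps : ∀ i ∈ Finset.range (h.toFinset.card + 1), a + i * d ∈ h.toFinset := by
    intro i hi'
    rw [Set.Finite.mem_toFinset]
    exact hi i (Finset.mem_range.1 hi')
  have := Finset.card_le_card_of_injOn _ hmaps hinj
  simp at this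

lemma infinite_of_not_mem_vdW {A : Set ℕ} (h : A ∉ vdWIdeal) : A.Infinite := by
  exact fun hf => h (finite_mem_vdW hf)

lemma univ_not_mem_vdW : (Set.univ : Set ℕ) ∉ vdWIdeal := by
  rw [not_mem_vdW_iff]
  intro n
  exact ⟨0, 1, le_refl 1, fun i _ => trivial⟩

/-- Finitary van der Waerden for Bool colorings, derived from
`Combinatorics.exists_mono_homothetic_copy` by an ultrafilter compactness argument. -/
lemma finitary_vdw (m : ℕ) :
    ∃ N, ∀ c : ℕ → Bool, ∃ a d, 1 ≤ d ∧ a + m * d ≤ N ∧ ∀ i < m, c (a + i * d) = c a := by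
  by_contra hcon
  push_neg at hcon
  choose cc hcc using hcon
  -- ultrafilter extending atTop
  haveI : (atTop : Filter ℕ).NeBot := atTop_neBot
  set U : Ultrafilter ℕ := Ultrafilter.of atTop with hU
  have hUatTop : ∀ K : ℕ, {N | K ≤ N} ∈ U :=
    fun K => Ultrafilter.of_le atTop (mem_atTop K)
  classical
  set cstar : ℕ → Bool := fun k => if {N | cc N k = true} ∈ U then true else false with hcstar
  have hagree : ∀ k, {N | cc N k = cstar k} ∈ U := by
    intro k
    by_cases h : {N | cc N k = true} ∈ U
    · have : cstar k = true := by simp [hcstar, h]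
      rw [this]; exact h
    · have h2 : cstar k = false := by simp [hcstar, h]
      rw [h2]
      have := (Ultrafilter.compl_mem_iff_notMem (s := {N | cc N k = true}) (f := U)).2 h
      refine U.toFilter.mem_of_superset this ?_
      intro N hN
      simp only [Set.mem_compl_iff, Set.mem_setOf_eq] at hN ⊢
      exact Bool.not_eq_true _ ▸ (by simpa using hN)
  obtain ⟨a, ha, b, c0, hmono⟩ :=
    Combinatorics.exists_mono_homothetic_copy (M := ℕ) (κ := Bool) (Finset.range m) cstar
  -- the AP : start b, difference a, length m : points b + i * a
  have hpts : ∀ i < m, cstar (b + i * a) = cstar b := by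
    intro i hi
    have h1 := hmono i (Finset.mem_range.2 hi)
    have h2 : cstar (a • 0 + b) = c0 := by
      by_cases hm : 0 < m
      · exact hmono 0 (Finset.mem_range.2 hm)
      · omega
    simp only [smul_eq_mul, mul_zero, zero_add] at h2
    simp only [smul_eq_mul] at h1
    rw [show b + i * a = a * i + b by ring, h1, ← h2]
  -- find a good N
  have hbig : (⋂ i ∈ Finset.range (m + 1), {N | cc N (b + i * a) = cstar (b + i * a)}) ∩
      {N | b + m * a ≤ N} ∈ U := by
    refine Filter.inter_mem ?_ (hUatTop _)
    refine (Filter.biInter_mem (Finset.range (m+1)).finite_toSet).2 ?_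
    intro i _
    exact hagree _
  obtain ⟨N, hN⟩ := U.toFilter.nonempty_of_mem hbig
  obtain ⟨hN1, hN2⟩ := hN
  simp only [Set.mem_iInter, Set.mem_setOf_eq, Finset.mem_coe, Finset.mem_range] at hN1 hN2
  have := hcc N b a ha hN2
  obtain ⟨i, him, hne⟩ := this
  apply hne
  have e1 : cc N (b + i * a) = cstar (b + i * a) := hN1 i (by omega)
  have e2 : cc N b = cstar b := by
    have := hN1 0 (by omega)
    simpa using this
  rw [e1, e2]
  exact hpts i him


-- ==== from w2.lean ====

/-- removing a 3-AP-free set from a vdW-positive set keeps it positive -/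
lemma diff_not_mem_vdW {A E : Set ℕ} (hA : A ∉ vdWIdeal) (hE : ¬ HasAPOfLength E 3) :
    A \ E ∉ vdWIdeal := by
  rw [not_mem_vdW_iff] at hA ⊢
  intro m
  set m' : ℕ := max m 3 with hm'
  obtain ⟨N, hN⟩ := finitary_vdw m'
  obtain ⟨a₀, d₀, hd₀, hpt⟩ := hA (N + 1)
  classical
  obtain ⟨a, d, hd, hbound, hmono⟩ := hN (fun i => decide (a₀ + i * d₀ ∈ E))
  have hin : ∀ i < m', a₀ + (a + i * d) * d₀ ∈ A := by
    intro i hi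
    apply hpt
    have : i * d ≤ m' * d := Nat.mul_le_mul_right d (le_of_lt hi)
    omega
  by_cases hc : (a₀ + a * d₀ ∈ E)
  · exfalso
    apply hE
    refine hasAP_anti (by omega) (?_ : HasAPOfLength E m')
    refine ⟨a₀ + a * d₀, d * d₀, Nat.one_le_iff_ne_zero.2 (by positivity), ?_⟩
    intro i hi
    have h1 := hmono i hi
    have h2 : decide (a₀ + (a + i * d) * d₀ ∈ E) = decide (a₀ + a * d₀ ∈ E) := h1
    have h3 : (a₀ + (a + i * d) * d₀ ∈ E) ↔ (a₀ + a * d₀ ∈ E) := by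
      constructor <;> intro h
      · exact of_decide_eq_true ((h2.symm.trans (decide_eq_true h)))
      · exact of_decide_eq_true ((h2.trans (decide_eq_true h)))
    have : a₀ + a * d₀ + i * (d * d₀) = a₀ + (a + i * d) * d₀ := by ring
    rw [this]
    exact h3.2 hc
  · refine hasAP_anti (le_max_left m 3) (?_ : HasAPOfLength (A \ E) m')
    refine ⟨a₀ + a * d₀, d * d₀, Nat.one_le_iff_ne_zero.2 (by positivity), ?_⟩
    intro i hi
    have : a₀ + a * d₀ + i * (d * d₀) = a₀ + (a + i * d) * d₀ := by ring
    rw [this]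
    refine ⟨hin i hi, ?_⟩
    intro hmem
    apply hc
    have h1 := hmono i hi
    have h3 : (a₀ + (a + i * d) * d₀ ∈ E) ↔ (a₀ + a * d₀ ∈ E) := by
      constructor <;> intro h
      · exact of_decide_eq_true ((h1.symm.trans (decide_eq_true h)))
      · exact of_decide_eq_true ((h1.trans (decide_eq_true h)))
    exact h3.1 hmem

lemma diff_union_not_mem_vdW {A : Set ℕ} (hA : A ∉ vdWIdeal) (E : ℕ → Set ℕ)
    (hE : ∀ k, ¬ HasAPOfLength (E k) 3) (L : ℕ) :
    A \ (⋃ k ∈ Finset.range L, E k) ∉ vdWIdeal := by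
  induction L with
  | zero => simpa using hA
  | succ n ih =>
      have heq : A \ (⋃ k ∈ Finset.range (n+1), E k)
          = (A \ (⋃ k ∈ Finset.range n, E k)) \ E n := by
        ext x
        simp only [Set.mem_diff, Set.mem_iUnion, Finset.mem_range, exists_prop, not_exists,
          not_and]
        constructor
        · rintro ⟨hx, h⟩
          exact ⟨⟨hx, fun k hk => h k (by omega)⟩, h n (by omega)⟩
        · rintro ⟨⟨hx, h⟩, hn⟩
          refine ⟨hx, fun k hk => ?_⟩
          rcases Nat.lt_succ_iff_lt_or_eq.1 hk with h' | h'
          · exact h k h'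
          · subst h'; exact hn
      rw [heq]
      exact diff_not_mem_vdW ih (hE n)

/-- Key lemma: every vdW-positive set A contains a positive set D meeting each of
countably many 3-AP-free sets finitely. -/
lemma key_lemma {A : Set ℕ} (hA : A ∉ vdWIdeal) (E : ℕ → Set ℕ)
    (hE : ∀ k, ¬ HasAPOfLength (E k) 3) :
    ∃ D : Set ℕ, D ⊆ A ∧ D ∉ vdWIdeal ∧ ∀ k, (D ∩ E k).Finite := by
  classical
  have hpos : ∀ L : ℕ, HasAPOfLength (A \ (⋃ k ∈ Finset.range L, E k)) L :=
    fun L => (not_mem_vdW_iff.1 (diff_union_not_mem_vdW hA E hE L)) L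
  choose a d hd hpt using hpos
  set P : ℕ → Set ℕ := fun L => {x | ∃ i < L, x = a L + i * d L} with hP
  have hPfin : ∀ L, (P L).Finite := by
    intro L
    have : P L ⊆ ↑((Finset.range L).image (fun i => a L + i * d L)) := by
      intro x hx
      obtain ⟨i, hi, rfl⟩ := hx
      simp only [Finset.coe_image, Set.mem_image, Finset.mem_coe, Finset.mem_range]
      exact ⟨i, hi, rfl⟩
    exact Set.Finite.subset (Finset.finite_toSet _) this
  have hPsub : ∀ L, P L ⊆ A \ (⋃ k ∈ Finset.range L, E k) := by
    intro L x hx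
    obtain ⟨i, hi, rfl⟩ := hx
    exact hpt L i hi
  refine ⟨⋃ L, P L, ?_, ?_, ?_⟩
  · intro x hx
    obtain ⟨L, hL⟩ := Set.mem_iUnion.1 hx
    exact (hPsub L hL).1
  · rw [not_mem_vdW_iff]
    intro n
    refine hasAP_mono (Set.subset_iUnion P n) ?_
    exact ⟨a n, d n, hd n, fun i hi => ⟨i, hi, rfl⟩⟩
  · intro k
    have : (⋃ L, P L) ∩ E k ⊆ ⋃ L ∈ Finset.range (k+1), P L := by
      rintro x ⟨hx1, hx2⟩
      obtain ⟨L, hL⟩ := Set.mem_iUnion.1 hx1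
      simp only [Set.mem_iUnion, Finset.mem_range, exists_prop]
      by_cases hLk : L < k + 1
      · exact ⟨L, hLk, hL⟩
      · exfalso
        have := (hPsub L hL).2
        apply this
        simp only [Set.mem_iUnion, Finset.mem_range, exists_prop]
        exact ⟨k, by omega, hx2⟩
    exact Set.Finite.subset (Set.Finite.biUnion (Finset.finite_toSet _) (fun L _ => hPfin L)) this


-- ==== from w3.lean ====

def IsGood (S : Set ℕ) : Prop := S.Infinite ∧ ¬ HasAPOfLength S 3

/-- a strictly doubling set has no 3-term AP -/
lemma no3AP_of_doubling {S : Set ℕ} (f : ℕ → ℕ) (hrange : S ⊆ Set.range f)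
    (hf : ∀ n, 2 * f n < f (n + 1)) : ¬ HasAPOfLength S 3 := by
  intro ⟨x, e, he, hpt⟩
  have hmono : StrictMono f := strictMono_nat_of_lt_succ (fun n => by have := hf n; omega)
  have h0 : x + 0 * e ∈ S := hpt 0 (by omega)
  have h1 : x + 1 * e ∈ S := hpt 1 (by omega)
  have h2 : x + 2 * e ∈ S := hpt 2 (by omega)
  obtain ⟨i, hi⟩ := hrange h1
  obtain ⟨j, hj⟩ := hrange h2
  have hij : i < j := by
    have : f i < f j := by omega
    exact hmono.lt_iff_lt.1 this
  have : 2 * f i < f j := by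
    calc 2 * f i < f (i + 1) := hf i
    _ ≤ f j := hmono.monotone (by omega)
  omega

/-- every infinite set contains an infinite 3-AP-free subset -/
lemma exists_good_subset {C : Set ℕ} (hC : C.Infinite) :
    ∃ S, S ⊆ C ∧ IsGood S := by
  classical
  have hstep : ∀ b : ℕ, ∃ x ∈ C, b < x := fun b => hC.exists_gt b
  choose F hF1 hF2 using hstep
  set f : ℕ → ℕ := fun n => Nat.rec (F 0) (fun _ ih => F (2 * ih)) n with hfdef
  have hf0 : ∀ n, f (n + 1) = F (2 * f n) := fun n => rfl
  have hfC : ∀ n, f n ∈ C := by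
    intro n
    cases n with
    | zero => exact hF1 0
    | succ k => rw [hf0]; exact hF1 _
  have hfd : ∀ n, 2 * f n < f (n + 1) := by
    intro n; rw [hf0]; exact hF2 (2 * f n)
  refine ⟨Set.range f, ?_, ?_, no3AP_of_doubling f (le_refl _) hfd⟩
  · rintro x ⟨n, rfl⟩; exact hfC n
  · apply Set.infinite_of_injective_forall_mem
      (f := f) (s := Set.range f) (strictMono_nat_of_lt_succ (fun n => by have := hfd n; omega)).injective
    exact fun n => ⟨n, rfl⟩

/-- diagonalization: given countably many 3-AP-free sets, find an infinite 3-AP-free set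
meeting each finitely -/
lemma exists_good_avoiding (E : ℕ → Set ℕ) (hE : ∀ k, ¬ HasAPOfLength (E k) 3) :
    ∃ S, IsGood S ∧ ∀ k, (S ∩ E k).Finite := by
  classical
  have hinf : ∀ L : ℕ, ((Set.univ : Set ℕ) \ (⋃ k ∈ Finset.range L, E k)).Infinite :=
    fun L => infinite_of_not_mem_vdW (diff_union_not_mem_vdW univ_not_mem_vdW E hE L)
  have hstep : ∀ L b : ℕ, ∃ x ∈ (Set.univ : Set ℕ) \ (⋃ k ∈ Finset.range L, E k), b < x :=
    fun L b => (hinf L).exists_gt b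
  choose F hF1 hF2 using hstep
  set f : ℕ → ℕ := fun n => Nat.rec (F 0 0) (fun m ih => F (m + 1) (2 * ih)) n with hfdef
  have hf0 : ∀ n, f (n + 1) = F (n + 1) (2 * f n) := fun n => rfl
  have hfd : ∀ n, 2 * f n < f (n + 1) := by
    intro n; rw [hf0]; exact hF2 (n + 1) (2 * f n)
  have hmono : StrictMono f := strictMono_nat_of_lt_succ (fun n => by have := hfd n; omega)
  have hfavoid : ∀ n k, k < n → f n ∉ E k := by
    intro n k hk
    have h1 : f n ∈ (Set.univ : Set ℕ) \ (⋃ j ∈ Finset.range n, E j) := by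
      cases n with
      | zero => omega
      | succ m => rw [hf0]; exact hF1 (m + 1) (2 * f m)
    intro hmem
    exact h1.2 (by simp only [Set.mem_iUnion, Finset.mem_range, exists_prop]; exact ⟨k, hk, hmem⟩)
  refine ⟨Set.range f, ⟨?_, no3AP_of_doubling f (le_refl _) hfd⟩, ?_⟩
  · exact Set.infinite_of_injective_forall_mem (f := f) hmono.injective (fun n => ⟨n, rfl⟩)
  · intro k
    have hsub : Set.range f ∩ E k ⊆ ↑((Finset.range (k+1)).image f) := by
      rintro x ⟨⟨n, rfl⟩, hx2⟩
      simp only [Finset.coe_image, Set.mem_image, Finset.mem_coe, Finset.mem_range]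
      refine ⟨n, ?_, rfl⟩
      by_contra hn
      exact hfavoid n k (by omega) hx2
    exact Set.Finite.subset (Finset.finite_toSet _) hsub

/-- The MAD family of 3-AP-free sets: pairwise a.d., all good, catching, uncountable. -/
lemma exists_MAD : ∃ 𝒜 : Set (Set ℕ),
    (∀ S ∈ 𝒜, IsGood S) ∧
    (𝒜.Pairwise fun S T => (S ∩ T).Finite) ∧
    (∀ C : Set ℕ, C.Infinite → ∃ S ∈ 𝒜, (C ∩ S).Infinite) ∧
    ¬ 𝒜.Countable := by
  classical
  set P : Set (Set (Set ℕ)) :=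
    {𝒜 | (∀ S ∈ 𝒜, IsGood S) ∧ (𝒜.Pairwise fun S T => (S ∩ T).Finite)} with hP
  obtain ⟨𝒜, h𝒜max⟩ := zorn_subset P (by
    intro c hc hchain
    refine ⟨⋃₀ c, ⟨?_, ?_⟩, fun s hs => Set.subset_sUnion_of_mem hs⟩
    · rintro S ⟨t, htc, hSt⟩
      exact (hc htc).1 S hSt
    · intro S hS T hT hST
      obtain ⟨t1, ht1, hSt1⟩ := hS
      obtain ⟨t2, ht2, hTt2⟩ := hT
      rcases hchain.total ht1 ht2 with h | h
      · exact (hc ht2).2 (h hSt1) hTt2 hST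
      · exact (hc ht1).2 hSt1 (h hTt2) hST)
  have h𝒜P : 𝒜 ∈ P := h𝒜max.1
  have hmaxadd : ∀ S : Set ℕ, IsGood S → (∀ T ∈ 𝒜, (S ∩ T).Finite) → S ∈ 𝒜 := by
    intro S hS hfin
    have : insert S 𝒜 ∈ P := by
      constructor
      · rintro T (rfl | hT)
        · exact hS
        · exact h𝒜P.1 T hT
      · intro T1 hT1 T2 hT2 hne
        rcases hT1 with rfl | hT1 <;> rcases hT2 with rfl | hT2
        · exact absurd rfl hne
        · exact hfin T2 hT2
        · rw [Set.inter_comm]; exact hfin T1 hT1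
        · exact h𝒜P.2 hT1 hT2 hne
    have := h𝒜max.2 this (Set.subset_insert S 𝒜)
    exact this (Set.mem_insert S 𝒜)
  have hcatch : ∀ C : Set ℕ, C.Infinite → ∃ S ∈ 𝒜, (C ∩ S).Infinite := by
    intro C hC
    obtain ⟨S, hSC, hSgood⟩ := exists_good_subset hC
    by_cases hin : ∀ T ∈ 𝒜, (S ∩ T).Finite
    · have hS𝒜 := hmaxadd S hSgood hin
      exact ⟨S, hS𝒜, by
        have : C ∩ S = S := Set.inter_eq_self_of_subset_right hSC
        rw [this]; exact hSgood.1⟩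
    · push_neg at hin
      obtain ⟨T, hT𝒜, hTinf⟩ := hin
      refine ⟨T, hT𝒜, ?_⟩
      exact Set.Infinite.mono (fun x hx => ⟨hSC hx.1, hx.2⟩) hTinf
  refine ⟨𝒜, h𝒜P.1, h𝒜P.2, hcatch, ?_⟩
  intro hcount
  -- 𝒜 countable : diagonalize
  by_cases hne : 𝒜.Nonempty
  · obtain ⟨g, hg⟩ := (Set.countable_iff_exists_surjective hne).1 hcount
    obtain ⟨S, hSgood, hSfin⟩ := exists_good_avoiding (fun k => (g k).val)
      (fun k => (h𝒜P.1 _ (g k).2).2)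
    have hS𝒜 : S ∈ 𝒜 := by
      apply hmaxadd S hSgood
      intro T hT
      obtain ⟨k, hk⟩ := hg ⟨T, hT⟩
      have hvt : (g k).val = T := by rw [hk]
      rw [← hvt]
      exact hSfin k
    obtain ⟨k, hk⟩ := hg ⟨S, hS𝒜⟩
    have hval : (g k).val = S := by rw [hk]
    have hfin := hSfin k
    rw [hval, Set.inter_self] at hfin
    exact hSgood.1 hfin
  · -- 𝒜 empty : any good set could be added
    rw [Set.not_nonempty_iff_eq_empty] at hne
    obtain ⟨S, _, hSgood⟩ := exists_good_subset (Set.infinite_univ (α := ℕ))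
    have := hmaxadd S hSgood (by rw [hne]; simp)
    rw [hne] at this
    exact this


-- ==== from w4.lean ====


lemma OT_mk : #OT = Cardinal.aleph 1 := by
  rw [Cardinal.mk_toType, Cardinal.card_ord]

instance : Nonempty OT := by
  rw [Ordinal.toType_nonempty_iff_ne_zero]
  simp only [ne_eq, Cardinal.ord_eq_zero]
  intro h
  have := Cardinal.aleph0_lt_aleph_one
  rw [h] at this
  simp at this

lemma OT_Iic_countable (x : OT) : Set.Countable (Set.Iic x) := by
  have h1 : Set.Countable (Set.Iio x) := by
    rw [Cardinal.countable_iff_lt_aleph_one]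
    exact Cardinal.mk_Iio_ord_toType x
  rw [← Set.Iio_insert]
  exact h1.insert x

lemma OT_wf : @WellFounded OT (· < ·) := wellFounded_lt

lemma OT_uncountable : ¬ (Set.univ : Set OT).Countable := by
  intro h
  have h2 : #(Set.univ : Set OT) ≤ Cardinal.aleph0 := h.le_aleph0
  rw [Cardinal.mk_univ, OT_mk] at h2
  exact absurd h2 (not_le.2 Cardinal.aleph0_lt_aleph_one)

lemma OT_exists_above {S : Set OT} (hS : S.Countable) : ∃ z : OT, ∀ α ∈ S, ¬ z ≤ α := by
  by_contra hcon
  push_neg at hcon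
  apply OT_uncountable
  have hsub : (Set.univ : Set OT) ⊆ ⋃ α ∈ S, Set.Iic α := by
    intro z _
    obtain ⟨α, hα, hz⟩ := hcon z
    exact Set.mem_biUnion hα hz
  exact Set.Countable.mono hsub (hS.biUnion (fun α _ => OT_Iic_countable α))

lemma OT_exists_lub (g : ℕ → OT) :
    ∃ l : OT, (∀ k, g k ≤ l) ∧ (∀ β, β < l → ∃ k, β < g k) := by
  obtain ⟨z, hz⟩ := OT_exists_above (Set.countable_range g)
  set UB : Set OT := {u | ∀ k, g k ≤ u} with hUB
  have hUBne : UB.Nonempty := ⟨z, fun k => le_of_lt (lt_of_not_ge (hz (g k) ⟨k, rfl⟩))⟩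
  refine ⟨OT_wf.min UB hUBne, OT_wf.min_mem UB hUBne, ?_⟩
  intro β hβ
  have hmem : β ∉ UB := fun hmem => OT_wf.not_lt_min UB hmem hβ
  rw [hUB, Set.mem_setOf_eq] at hmem
  push_neg at hmem
  exact hmem

lemma OT_exists_strictmono {C : Set OT} (hC : C.Infinite) :
    ∃ δ : ℕ → OT, StrictMono δ ∧ ∀ j, δ j ∈ C := by
  classical
  set next : OT → OT := fun b =>
    if h : (C \ Set.Iic b).Nonempty then OT_wf.min _ h else b with hnext
  set δ : ℕ → OT := fun n =>
    Nat.rec (OT_wf.min C hC.nonempty) (fun _ ih => next ih) n with hδ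
  have hδs : ∀ n, δ (n + 1) = next (δ n) := fun n => rfl
  have hdiff : ∀ b : OT, ({x ∈ C | x ≤ b}).Finite → (C \ Set.Iic b).Nonempty := by
    intro b hfin
    have heq : C \ Set.Iic b = C \ {x ∈ C | x ≤ b} := by
      ext x
      simp only [Set.mem_diff, Set.mem_Iic, Set.mem_sep_iff]
      tauto
    rw [heq]
    exact (hC.diff hfin).nonempty
  have key : ∀ n, δ n ∈ C ∧ ({x ∈ C | x ≤ δ n}).Finite := by
    intro n
    induction n with
    | zero =>
        refine ⟨OT_wf.min_mem C hC.nonempty, ?_⟩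
        have hs : {x ∈ C | x ≤ δ 0} ⊆ {δ 0} := by
          intro x ⟨hx1, hx2⟩
          rcases lt_or_eq_of_le hx2 with h | h
          · exact absurd h (OT_wf.not_lt_min C hx1)
          · exact h
        exact Set.Finite.subset (Set.finite_singleton _) hs
    | succ n ih =>
        have hne : (C \ Set.Iic (δ n)).Nonempty := hdiff _ ih.2
        have heq : δ (n+1) = OT_wf.min (C \ Set.Iic (δ n)) hne := by
          rw [hδs, hnext]; simp [hne]
        have hmem := OT_wf.min_mem (C \ Set.Iic (δ n)) hne
        rw [← heq] at hmem
        refine ⟨hmem.1, ?_⟩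
        have hsub : {x ∈ C | x ≤ δ (n+1)} ⊆ {x ∈ C | x ≤ δ n} ∪ {δ (n+1)} := by
          intro x ⟨hx1, hx2⟩
          by_cases hle : x ≤ δ n
          · exact Or.inl ⟨hx1, hle⟩
          · right
            rcases lt_or_eq_of_le hx2 with h | h
            · exfalso
              have hxin : x ∈ C \ Set.Iic (δ n) := ⟨hx1, hle⟩
              rw [heq] at h
              exact OT_wf.not_lt_min _ hxin h
            · exact h
        exact Set.Finite.subset (ih.2.union (Set.finite_singleton _)) hsub
  have hlt : ∀ n, δ n < δ (n + 1) := by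
    intro n
    have hne : (C \ Set.Iic (δ n)).Nonempty := hdiff _ (key n).2
    have heq : δ (n+1) = OT_wf.min (C \ Set.Iic (δ n)) hne := by
      rw [hδs, hnext]; simp [hne]
    have hmem := OT_wf.min_mem (C \ Set.Iic (δ n)) hne
    rw [← heq] at hmem
    exact lt_of_not_ge (fun h => hmem.2 h)
  exact ⟨δ, strictMono_nat_of_lt_succ hlt, fun j => (key j).1⟩


-- ==== from w5.lean ====

/-- openness predicate for our ladder/ordinal topology on `ℕ ⊕ OT` -/
def IsOp (E : OT → Set ℕ) (U : Set (ℕ ⊕ OT)) : Prop :=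
  ∀ α : OT, Sum.inr α ∈ U →
    ((IsMin α ∨ ∃ β, β < α ∧ ∀ γ, β < γ → γ ≤ α → Sum.inr γ ∈ U) ∧
      (E α \ {m | Sum.inl m ∈ U}).Finite)

def theTop (E : OT → Set ℕ) : TopologicalSpace (ℕ ⊕ OT) where
  IsOpen := IsOp E
  isOpen_univ := by
    intro α _
    constructor
    · by_cases h : IsMin α
      · exact Or.inl h
      · rw [not_isMin_iff] at h
        obtain ⟨β, hβ⟩ := h
        exact Or.inr ⟨β, hβ, fun γ _ _ => trivial⟩
    · simp
  isOpen_inter := by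
    intro U V hU hV α hα
    obtain ⟨hαU, hαV⟩ := hα
    obtain ⟨hU1, hU2⟩ := hU α hαU
    obtain ⟨hV1, hV2⟩ := hV α hαV
    constructor
    · rcases hU1 with h | ⟨β1, hβ1, hint1⟩
      · exact Or.inl h
      rcases hV1 with h | ⟨β2, hβ2, hint2⟩
      · exact Or.inl h
      refine Or.inr ⟨max β1 β2, max_lt hβ1 hβ2, fun γ hγ1 hγ2 => ?_⟩
      exact ⟨hint1 γ (lt_of_le_of_lt (le_max_left _ _) hγ1) hγ2,
             hint2 γ (lt_of_le_of_lt (le_max_right _ _) hγ1) hγ2⟩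
    · have : E α \ {m | Sum.inl m ∈ U ∩ V} ⊆
          (E α \ {m | Sum.inl m ∈ U}) ∪ (E α \ {m | Sum.inl m ∈ V}) := by
        intro x hx
        simp only [Set.mem_diff, Set.mem_setOf_eq, Set.mem_inter_iff, Set.mem_union] at hx ⊢
        tauto
      exact Set.Finite.subset (hU2.union hV2) this
  isOpen_sUnion := by
    intro S hS α hα
    obtain ⟨U₀, hU₀S, hαU₀⟩ := hα
    obtain ⟨h1, h2⟩ := hS U₀ hU₀S α hαU₀
    constructor
    · rcases h1 with h | ⟨β, hβ, hint⟩
      · exact Or.inl h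
      · exact Or.inr ⟨β, hβ, fun γ hγ1 hγ2 => ⟨U₀, hU₀S, hint γ hγ1 hγ2⟩⟩
    · refine Set.Finite.subset h2 ?_
      intro x hx
      simp only [Set.mem_diff, Set.mem_setOf_eq] at hx ⊢
      exact ⟨hx.1, fun h => hx.2 ⟨U₀, hU₀S, h⟩⟩

lemma isOpen_theTop {E : OT → Set ℕ} {U : Set (ℕ ⊕ OT)} :
    @IsOpen _ (theTop E) U ↔ IsOp E U := Iff.rfl

lemma isOp_singleton_int (E : OT → Set ℕ) (n : ℕ) : IsOp E {Sum.inl n} := by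
  intro α hα
  simp at hα

lemma isOp_compl_int (E : OT → Set ℕ) (n : ℕ) : IsOp E {Sum.inl n}ᶜ := by
  intro α _
  constructor
  · by_cases h : IsMin α
    · exact Or.inl h
    · rw [not_isMin_iff] at h
      obtain ⟨β, hβ⟩ := h
      exact Or.inr ⟨β, hβ, fun γ _ _ => by simp⟩
  · refine Set.Finite.subset (Set.finite_singleton n) ?_
    intro x hx
    simp only [Set.mem_diff, Set.mem_setOf_eq, Set.mem_compl_iff, not_not] at hx
    have := hx.2
    simp only [Set.mem_singleton_iff] at this ⊢
    exact Sum.inl.injEq _ _ ▸ (by injection this)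

/-- basic open around the initial segment `Iic α` with integer trace `W` -/
def UIic (α : OT) (W : Set ℕ) : Set (ℕ ⊕ OT) :=
  {x | (∃ γ, γ ≤ α ∧ x = Sum.inr γ) ∨ (∃ m ∈ W, x = Sum.inl m)}

@[simp] lemma inr_mem_UIic {α γ : OT} {W : Set ℕ} : Sum.inr γ ∈ UIic α W ↔ γ ≤ α := by
  simp only [UIic, Set.mem_setOf_eq]
  constructor
  · rintro (⟨γ', hγ', h⟩ | ⟨m, _, h⟩)
    · injection h with h'; rwa [h']
    · exact absurd h (by simp)
  · intro h; exact Or.inl ⟨γ, h, rfl⟩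

@[simp] lemma inl_mem_UIic {α : OT} {m : ℕ} {W : Set ℕ} : Sum.inl m ∈ UIic α W ↔ m ∈ W := by
  simp only [UIic, Set.mem_setOf_eq]
  constructor
  · rintro (⟨γ', _, h⟩ | ⟨m', hm', h⟩)
    · exact absurd h (by simp)
    · injection h with h'; rwa [h']
  · intro h; exact Or.inr ⟨m, h, rfl⟩

lemma isOp_UIic (E : OT → Set ℕ) (α : OT) (W : Set ℕ)
    (h : ∀ γ, γ ≤ α → (E γ \ W).Finite) : IsOp E (UIic α W) := by
  intro δ hδ
  rw [inr_mem_UIic] at hδ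
  constructor
  · by_cases hm : IsMin δ
    · exact Or.inl hm
    · rw [not_isMin_iff] at hm
      obtain ⟨β, hβ⟩ := hm
      refine Or.inr ⟨β, hβ, fun γ _ hγ2 => ?_⟩
      rw [inr_mem_UIic]
      exact le_trans hγ2 hδ
  · refine Set.Finite.subset (h δ hδ) ?_
    intro x hx
    simp only [Set.mem_diff, Set.mem_setOf_eq, inl_mem_UIic] at hx ⊢
    exact hx

/-- basic open around the segment `Ioc α α'` with integer trace `W` -/
def UIoc (α α' : OT) (W : Set ℕ) : Set (ℕ ⊕ OT) :=
  {x | (∃ γ, α < γ ∧ γ ≤ α' ∧ x = Sum.inr γ) ∨ (∃ m ∈ W, x = Sum.inl m)}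

@[simp] lemma inr_mem_UIoc {α α' γ : OT} {W : Set ℕ} :
    Sum.inr γ ∈ UIoc α α' W ↔ α < γ ∧ γ ≤ α' := by
  simp only [UIoc, Set.mem_setOf_eq]
  constructor
  · rintro (⟨γ', h1, h2, h⟩ | ⟨m, _, h⟩)
    · injection h with h'; subst h'; exact ⟨h1, h2⟩
    · exact absurd h (by simp)
  · rintro ⟨h1, h2⟩; exact Or.inl ⟨γ, h1, h2, rfl⟩

@[simp] lemma inl_mem_UIoc {α α' : OT} {m : ℕ} {W : Set ℕ} :
    Sum.inl m ∈ UIoc α α' W ↔ m ∈ W := by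
  simp only [UIoc, Set.mem_setOf_eq]
  constructor
  · rintro (⟨γ', _, _, h⟩ | ⟨m', hm', h⟩)
    · exact absurd h (by simp)
    · injection h with h'; rwa [h']
  · intro h; exact Or.inr ⟨m, h, rfl⟩

lemma isOp_UIoc (E : OT → Set ℕ) (α α' : OT) (W : Set ℕ)
    (h : ∀ γ, α < γ → γ ≤ α' → (E γ \ W).Finite) : IsOp E (UIoc α α' W) := by
  intro δ hδ
  rw [inr_mem_UIoc] at hδ
  constructor
  · refine Or.inr ⟨α, hδ.1, fun γ hγ1 hγ2 => ?_⟩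
    rw [inr_mem_UIoc]
    exact ⟨hγ1, le_trans hγ2 hδ.2⟩
  · refine Set.Finite.subset (h δ hδ.1 hδ.2) ?_
    intro x hx
    simp only [Set.mem_diff, Set.mem_setOf_eq, inl_mem_UIoc] at hx ⊢
    exact hx


-- ==== from w6.lean ====

/-- disjointification of a countable a.d. family below α' -/
lemma exists_disjointification (E : OT → Set ℕ)
    (hEad : ∀ α β : OT, α ≠ β → (E α ∩ E β).Finite) (α' : OT) :
    ∃ F : {x : OT // x ≤ α'} → Set ℕ,
      (∀ x, (F x).Finite) ∧
      (∀ x y, x ≠ y → (E x.val \ F x) ∩ (E y.val \ F y) = ∅) := by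
  classical
  have hcnt : Set.Countable (Set.Iic α') := OT_Iic_countable α'
  have hne : (Set.Iic α').Nonempty := ⟨α', Set.mem_Iic.2 (le_refl _)⟩
  obtain ⟨g, hg⟩ := (Set.countable_iff_exists_surjective hne).1 hcnt
  -- g : ℕ → ↥(Iic α') surjective
  have hex : ∀ x : {x : OT // x ≤ α'}, ∃ j, g j = ⟨x.val, x.2⟩ := by
    intro x
    obtain ⟨j, hj⟩ := hg ⟨x.val, x.2⟩
    exact ⟨j, hj⟩
  set k : {x : OT // x ≤ α'} → ℕ := fun x => Nat.find (hex x) with hk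
  have hgk : ∀ x, g (k x) = ⟨x.val, x.2⟩ := fun x => Nat.find_spec (hex x)
  set F : {x : OT // x ≤ α'} → Set ℕ :=
    fun x => E x.val ∩ ⋃ j ∈ Finset.range (k x), E (g j).val with hF
  have hkinj : ∀ x y, x ≠ y → k x ≠ k y := by
    intro x y hxy heq
    apply hxy
    have h1 : (⟨x.val, x.2⟩ : {x : OT // x ≤ α'}) = ⟨y.val, y.2⟩ := by
      have h := congrArg Subtype.val ((hgk x).symm.trans ((congrArg g heq).trans (hgk y)))
      exact Subtype.ext h
    exact Subtype.ext (congrArg Subtype.val h1)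
  refine ⟨F, ?_, ?_⟩
  · intro x
    have hsub : F x ⊆ ⋃ j ∈ Finset.range (k x), (E x.val ∩ E (g j).val) := by
      rintro z ⟨hz1, hz2⟩
      simp only [Set.mem_iUnion, Finset.mem_range, exists_prop] at hz2 ⊢
      obtain ⟨j, hj, hzj⟩ := hz2
      exact ⟨j, hj, hz1, hzj⟩
    refine Set.Finite.subset ?_ hsub
    refine Set.Finite.biUnion (Finset.finite_toSet _) ?_
    intro j hj
    simp only [Finset.mem_coe, Finset.mem_range] at hj
    apply hEad
    intro hval
    have hgj : g j = ⟨x.val, x.2⟩ := Subtype.ext hval.symm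
    exact Nat.find_min (hex x) hj hgj
  · intro x y hxy
    have hkk := hkinj x y hxy
    rcases lt_or_gt_of_ne hkk with h | h
    · rw [Set.eq_empty_iff_forall_notMem]
      rintro z ⟨⟨hzx1, _⟩, ⟨hzy1, hzy2⟩⟩
      apply hzy2
      refine ⟨hzy1, ?_⟩
      simp only [Set.mem_iUnion, Finset.mem_range, exists_prop]
      refine ⟨k x, h, ?_⟩
      rw [hgk x]
      exact hzx1
    · rw [Set.eq_empty_iff_forall_notMem]
      rintro z ⟨⟨hzx1, hzx2⟩, ⟨hzy1, _⟩⟩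
      apply hzx2
      refine ⟨hzx1, ?_⟩
      simp only [Set.mem_iUnion, Finset.mem_range, exists_prop]
      refine ⟨k y, h, ?_⟩
      rw [hgk y]
      exact hzy1

lemma t2_theTop (E : OT → Set ℕ)
    (hEad : ∀ α β : OT, α ≠ β → (E α ∩ E β).Finite) :
    @T2Space _ (theTop E) := by
  letI : TopologicalSpace (ℕ ⊕ OT) := theTop E
  constructor
  intro x y hxy
  -- helper for the symmetric ordinal case
  have main : ∀ α α' : OT, α < α' → ∃ u v : Set (ℕ ⊕ OT),
      IsOpen u ∧ IsOpen v ∧ Sum.inr α ∈ u ∧ Sum.inr α' ∈ v ∧ Disjoint u v := by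
    intro α α' hαα'
    obtain ⟨F, hFfin, hFdisj⟩ := exists_disjointification E hEad α'
    set WU : Set ℕ := ⋃ x : {x : OT // x ≤ α'}, ⋃ (_ : x.val ≤ α), (E x.val \ F x) with hWU
    set WV : Set ℕ := ⋃ x : {x : OT // x ≤ α'}, ⋃ (_ : α < x.val), (E x.val \ F x) with hWV
    refine ⟨UIic α WU, UIoc α α' WV, ?_, ?_, ?_, ?_, ?_⟩
    · rw [isOpen_theTop]
      apply isOp_UIic
      intro γ hγ
      have hγ' : γ ≤ α' := le_trans hγ (le_of_lt hαα')
      have hsub : E γ \ WU ⊆ F ⟨γ, hγ'⟩ := by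
        intro z hz
        by_contra hzF
        apply hz.2
        rw [hWU]
        refine Set.mem_iUnion.2 ⟨⟨γ, hγ'⟩, Set.mem_iUnion.2 ⟨hγ, ⟨hz.1, hzF⟩⟩⟩
      exact Set.Finite.subset (hFfin _) hsub
    · rw [isOpen_theTop]
      apply isOp_UIoc
      intro γ hγ1 hγ2
      have hsub : E γ \ WV ⊆ F ⟨γ, hγ2⟩ := by
        intro z hz
        by_contra hzF
        apply hz.2
        rw [hWV]
        exact Set.mem_iUnion.2 ⟨⟨γ, hγ2⟩, Set.mem_iUnion.2 ⟨hγ1, ⟨hz.1, hzF⟩⟩⟩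
      exact Set.Finite.subset (hFfin _) hsub
    · rw [inr_mem_UIic]
    · rw [inr_mem_UIoc]; exact ⟨hαα', le_refl _⟩
    · rw [Set.disjoint_left]
      intro z hzU hzV
      cases z with
      | inr γ =>
          rw [inr_mem_UIic] at hzU
          rw [inr_mem_UIoc] at hzV
          exact absurd hzU (not_le.2 hzV.1)
      | inl m =>
          rw [inl_mem_UIic] at hzU
          rw [inl_mem_UIoc] at hzV
          rw [hWU] at hzU
          rw [hWV] at hzV
          obtain ⟨x, hx⟩ := Set.mem_iUnion.1 hzU
          obtain ⟨hxle, hxm⟩ := Set.mem_iUnion.1 hx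
          obtain ⟨y, hy⟩ := Set.mem_iUnion.1 hzV
          obtain ⟨hylt, hym⟩ := Set.mem_iUnion.1 hy
          have hxy : x ≠ y := by
            intro h
            rw [h] at hxle
            exact absurd hxle (not_le.2 hylt)
          have := hFdisj x y hxy
          rw [Set.eq_empty_iff_forall_notMem] at this
          exact this m ⟨hxm, hym⟩
  cases x with
  | inl n =>
      cases y with
      | inl n' =>
          refine ⟨{Sum.inl n}, {Sum.inl n'}, isOpen_theTop.2 (isOp_singleton_int E n),
            isOpen_theTop.2 (isOp_singleton_int E n'), rfl, rfl, ?_⟩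
          rw [Set.disjoint_left]
          intro z hz1 hz2
          simp only [Set.mem_singleton_iff] at hz1 hz2
          rw [hz1] at hz2
          injection hz2 with h
          apply hxy
          rw [h]
      | inr α =>
          refine ⟨{Sum.inl n}, {Sum.inl n}ᶜ, isOpen_theTop.2 (isOp_singleton_int E n),
            isOpen_theTop.2 (isOp_compl_int E n), rfl, by simp, disjoint_compl_right⟩
  | inr α =>
      cases y with
      | inl n =>
          refine ⟨{Sum.inl n}ᶜ, {Sum.inl n}, isOpen_theTop.2 (isOp_compl_int E n),
            isOpen_theTop.2 (isOp_singleton_int E n), by simp, rfl, disjoint_compl_left⟩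
      | inr α' =>
          have hne : α ≠ α' := fun h => hxy (by rw [h])
          rcases lt_or_gt_of_ne hne with h | h
          · exact main α α' h
          · obtain ⟨u, v, hu, hv, hαu, hαv, hd⟩ := main α' α h
            exact ⟨v, u, hv, hu, hαv, hαu, hd.symm⟩


-- ==== from w7.lean ====

lemma seqCompact_theTop (E : OT → Set ℕ)
    (hEcatch : ∀ C : Set ℕ, C.Infinite → ∃ α, (C ∩ E α).Infinite) :
    @SeqCompactSpace _ (theTop E) := by
  letI : TopologicalSpace (ℕ ⊕ OT) := theTop E
  constructor
  intro u _
  classical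
  by_cases hconst : ∃ v : ℕ ⊕ OT, {n | u n = v}.Infinite
  · -- constant subsequence
    obtain ⟨v, hv⟩ := hconst
    refine ⟨v, trivial, Nat.nth (fun n => u n = v), Nat.nth_strictMono hv, ?_⟩
    have heq : ∀ k, u (Nat.nth (fun n => u n = v) k) = v :=
      fun k => Nat.nth_mem_of_infinite hv k
    rw [tendsto_nhds]
    intro U hU hvU
    refine Filter.Eventually.mono (Filter.eventually_ge_atTop 0) ?_
    intro k _
    simp only [Function.comp_apply, Set.mem_preimage]
    rw [heq k]
    exact hvU
  · push_neg at hconst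
    have hfib : ∀ v : ℕ ⊕ OT, {n | u n = v}.Finite :=
      fun v => hconst v
    set L : Set ℕ := {n | ∃ m : ℕ, u n = Sum.inl m} with hL
    set R : Set ℕ := {n | ∃ γ : OT, u n = Sum.inr γ} with hR
    have hLR : L ∪ R = Set.univ := by
      apply Set.eq_univ_of_forall
      intro n
      cases hn : u n with
      | inl m => exact Or.inl ⟨m, hn⟩
      | inr γ => exact Or.inr ⟨γ, hn⟩
    have hLorR : L.Infinite ∨ R.Infinite := by
      by_contra hcon
      push_neg at hcon
      have := Set.Finite.union hcon.1 hcon.2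
      rw [hLR] at this
      exact Set.infinite_univ this
    rcases hLorR with hLinf | hRinf
    · -- integer case
      set C : Set ℕ := {m | ∃ n, u n = Sum.inl m} with hC
      have hCinf : C.Infinite := by
        intro hCfin
        apply hLinf
        have hsub : L ⊆ ⋃ m ∈ C, {n | u n = Sum.inl m} := by
          rintro n ⟨m, hm⟩
          exact Set.mem_biUnion ⟨n, hm⟩ hm
        exact Set.Finite.subset (hCfin.biUnion (fun m _ => hfib (Sum.inl m))) hsub
      obtain ⟨α, hα⟩ := hEcatch C hCinf
      -- step lemma
      have hstep : ∀ N B : ℕ, ∃ q : ℕ × ℕ, N < q.1 ∧ B < q.2 ∧ q.2 ∈ E α ∧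
          u q.1 = Sum.inl q.2 := by
        intro N B
        have hVNfin : {m : ℕ | ∃ n ≤ N, u n = Sum.inl m}.Finite := by
          have : {m : ℕ | ∃ n ≤ N, u n = Sum.inl m} ⊆
              ↑((Finset.range (N+1)).image (fun n => (u n).elim id (fun _ => 0))) := by
            rintro m ⟨n, hn, hm⟩
            simp only [Finset.coe_image, Set.mem_image, Finset.mem_coe, Finset.mem_range]
            refine ⟨n, by omega, ?_⟩
            rw [hm]
            rfl
          exact Set.Finite.subset (Finset.finite_toSet _) this
        have : ((C ∩ E α) \ ({m | ∃ n ≤ N, u n = Sum.inl m} ∪ Set.Iic B)).Nonempty :=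
          (hα.diff (hVNfin.union (Set.finite_Iic B))).nonempty
        obtain ⟨m, ⟨hmC, hmE⟩, hmno⟩ := this
        obtain ⟨n, hn⟩ := hmC
        refine ⟨(n, m), ?_, ?_, hmE, hn⟩
        · by_contra hcon
          push_neg at hcon
          exact hmno (Or.inl ⟨n, hcon, hn⟩)
        · by_contra hcon
          push_neg at hcon
          exact hmno (Or.inr hcon)
      have hstep' : ∀ p : ℕ × ℕ, ∃ q : ℕ × ℕ, p.1 < q.1 ∧ p.2 < q.2 ∧ q.2 ∈ E α ∧
          u q.1 = Sum.inl q.2 := fun p => hstep p.1 p.2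
      choose nxt h1 h2 h3 h4 using hstep'
      set p : ℕ → ℕ × ℕ := fun k => Nat.rec (nxt (0, 0)) (fun _ ih => nxt ih) k with hp
      have hps : ∀ k, p (k + 1) = nxt (p k) := fun k => rfl
      have hprop : ∀ k, (p k).2 ∈ E α ∧ u (p k).1 = Sum.inl (p k).2 := by
        intro k
        cases k with
        | zero => exact ⟨h3 (0,0), h4 (0,0)⟩
        | succ j => rw [hps]; exact ⟨h3 (p j), h4 (p j)⟩
      have hmono1 : StrictMono (fun k => (p k).1) :=
        strictMono_nat_of_lt_succ (fun k => by rw [hps]; exact h1 (p k))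
      have hmono2 : StrictMono (fun k => (p k).2) :=
        strictMono_nat_of_lt_succ (fun k => by rw [hps]; exact h2 (p k))
      refine ⟨Sum.inr α, trivial, fun k => (p k).1, hmono1, ?_⟩
      rw [tendsto_nhds]
      intro U hU hαU
      have hfin := (isOpen_theTop.1 hU α hαU).2
      obtain ⟨b, hb⟩ := hfin.bddAbove
      refine Filter.Eventually.mono (Filter.eventually_ge_atTop (b + 1)) ?_
      intro k hk
      simp only [Function.comp_apply, Set.mem_preimage]
      have h5 := (hprop k).2
      rw [h5]
      by_contra hnot
      have : (p k).2 ∈ E α \ {m | Sum.inl m ∈ U} := ⟨(hprop k).1, hnot⟩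
      have hle := hb this
      have : k ≤ (p k).2 := hmono2.le_apply
      omega
    · -- ordinal case
      set C : Set OT := {γ | ∃ n, u n = Sum.inr γ} with hC
      have hCinf : C.Infinite := by
        intro hCfin
        apply hRinf
        have hsub : R ⊆ ⋃ γ ∈ C, {n | u n = Sum.inr γ} := by
          rintro n ⟨γ, hγ⟩
          exact Set.mem_biUnion ⟨n, hγ⟩ hγ
        exact Set.Finite.subset (hCfin.biUnion (fun γ _ => hfib (Sum.inr γ))) hsub
      obtain ⟨δ, hδmono, hδC⟩ := OT_exists_strictmono hCinf
      -- T : positions hitting the δ-range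
      set T : Set ℕ := ⋃ j : ℕ, {n | u n = Sum.inr (δ j)} with hT
      have hTinf : T.Infinite := by
        have hw : ∀ j : ℕ, ∃ n, u n = Sum.inr (δ j) := fun j => hδC j
        choose w hwspec using hw
        refine Set.infinite_of_injective_forall_mem (f := w) ?_ ?_
        · intro j1 j2 hj
          have : Sum.inr (δ j1) = (Sum.inr (δ j2) : ℕ ⊕ OT) := by
            rw [← hwspec j1, ← hwspec j2, hj]
          injection this with h
          exact hδmono.injective h
        · intro j
          exact Set.mem_iUnion.2 ⟨j, hwspec j⟩
      -- step lemma
      have hstep : ∀ N J : ℕ, ∃ q : ℕ × ℕ, N < q.1 ∧ J < q.2 ∧ u q.1 = Sum.inr (δ q.2) := by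
        intro N J
        have hrem : (Set.Iic N ∪ ⋃ j ∈ Finset.range (J + 1), {n | u n = Sum.inr (δ j)}).Finite :=
          (Set.finite_Iic N).union
            (Set.Finite.biUnion (Finset.finite_toSet _) (fun j _ => hfib (Sum.inr (δ j))))
        obtain ⟨n, hnT, hnno⟩ := (hTinf.diff hrem).nonempty
        obtain ⟨j, hj⟩ := Set.mem_iUnion.1 hnT
        refine ⟨(n, j), ?_, ?_, hj⟩
        · by_contra hcon
          push_neg at hcon
          exact hnno (Or.inl hcon)
        · by_contra hcon
          push_neg at hcon
          apply hnno
          refine Or.inr ?_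
          simp only [Set.mem_iUnion, Finset.mem_range, exists_prop]
          exact ⟨j, by omega, hj⟩
      have hstep' : ∀ p : ℕ × ℕ, ∃ q : ℕ × ℕ, p.1 < q.1 ∧ p.2 < q.2 ∧
          u q.1 = Sum.inr (δ q.2) := fun p => hstep p.1 p.2
      choose nxt h1 h2 h3 using hstep'
      set p : ℕ → ℕ × ℕ := fun k => Nat.rec (nxt (0, 0)) (fun _ ih => nxt ih) k with hp
      have hps : ∀ k, p (k + 1) = nxt (p k) := fun k => rfl
      have hprop : ∀ k, u (p k).1 = Sum.inr (δ (p k).2) := by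
        intro k
        cases k with
        | zero => exact h3 (0,0)
        | succ j => rw [hps]; exact h3 (p j)
      have hmono1 : StrictMono (fun k => (p k).1) :=
        strictMono_nat_of_lt_succ (fun k => by rw [hps]; exact h1 (p k))
      have hmono2 : StrictMono (fun k => (p k).2) :=
        strictMono_nat_of_lt_succ (fun k => by rw [hps]; exact h2 (p k))
      set g : ℕ → OT := fun k => δ (p k).2 with hg
      have hgmono : StrictMono g := hδmono.comp hmono2
      obtain ⟨l, hl1, hl2⟩ := OT_exists_lub g
      refine ⟨Sum.inr l, trivial, fun k => (p k).1, hmono1, ?_⟩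
      rw [tendsto_nhds]
      intro U hU hlU
      obtain ⟨hint, _⟩ := isOpen_theTop.1 hU l hlU
      have hnotmin : ¬ IsMin l := by
        intro hmin
        have hg0 : g 0 < l := lt_of_lt_of_le (hgmono (by omega : (0:ℕ) < 1)) (hl1 1)
        exact absurd (hmin (le_of_lt hg0)) (not_le.2 hg0)
      rcases hint with h | ⟨β, hβ, hIoc⟩
      · exact absurd h hnotmin
      · obtain ⟨k₀, hk₀⟩ := hl2 β hβ
        refine Filter.Eventually.mono (Filter.eventually_ge_atTop k₀) ?_
        intro k hk
        simp only [Function.comp_apply, Set.mem_preimage]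
        rw [hprop k]
        apply hIoc
        · exact lt_of_lt_of_le hk₀ (hgmono.monotone hk)
        · exact hl1 k

-- ==== from w8.lean ====

lemma noncompact_theTop (E : OT → Set ℕ) : ¬ @CompactSpace _ (theTop E) := by
  letI : TopologicalSpace (ℕ ⊕ OT) := theTop E
  intro hcomp
  classical
  set c : (ℕ ⊕ OT) → Set (ℕ ⊕ OT) := fun x =>
    match x with
    | Sum.inl n => {Sum.inl n}
    | Sum.inr α => UIic α (⋃ γ ∈ Set.Iic α, E γ) with hc
  have hopen : ∀ x, IsOpen (c x) := by
    intro x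
    cases x with
    | inl n => exact isOpen_theTop.2 (isOp_singleton_int E n)
    | inr α =>
        refine isOpen_theTop.2 (isOp_UIic E α _ ?_)
        intro γ hγ
        have : E γ \ (⋃ γ' ∈ Set.Iic α, E γ') = ∅ := by
          rw [Set.diff_eq_empty]
          exact Set.subset_biUnion_of_mem hγ
        rw [this]
        exact Set.finite_empty
  have hcover : (Set.univ : Set (ℕ ⊕ OT)) ⊆ ⋃ x, c x := by
    intro x _
    refine Set.mem_iUnion.2 ⟨x, ?_⟩
    cases x with
    | inl n => exact rfl
    | inr α => exact inr_mem_UIic.2 (le_refl _)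
  obtain ⟨t, ht⟩ := hcomp.isCompact_univ.elim_finite_subcover c hopen hcover
  set S : Set OT := {α | Sum.inr α ∈ t} with hS
  have hSfin : S.Finite := by
    have hpre : (Sum.inr ⁻¹' (↑t : Set (ℕ ⊕ OT)) : Set OT).Finite :=
      Set.Finite.preimage (Set.injOn_of_injective Sum.inr_injective) t.finite_toSet
    exact hpre.subset (fun α hα => hα)
  obtain ⟨z, hz⟩ := OT_exists_above hSfin.countable
  have hzmem := ht (Set.mem_univ (Sum.inr z))
  obtain ⟨x, hxt, hzV⟩ := Set.mem_iUnion₂.1 hzmem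
  cases x with
  | inl n => simp [hc] at hzV
  | inr α =>
      have hzα : z ≤ α := inr_mem_UIic.1 hzV
      exact hz α hxt hzα

lemma noBW_theTop (E : OT → Set ℕ) (hE3 : ∀ α, ¬ HasAPOfLength (E α) 3) :
    ¬ @BWProp ℕ vdWIdeal _ (theTop E) := by
  letI : TopologicalSpace (ℕ ⊕ OT) := theTop E
  intro hbw
  classical
  obtain ⟨A, hA, p, hp⟩ := hbw Sum.inl
  cases p with
  | inl m =>
      have hsing : ¬ HasAPOfLength ({m} : Set ℕ) 3 := by
        rintro ⟨a, d, hd, h⟩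
        have h0 := h 0 (by omega)
        have h1 := h 1 (by omega)
        simp only [Set.mem_singleton_iff] at h0 h1
        omega
      have hU := hp {Sum.inl m} (isOpen_theTop.2 (isOp_singleton_int E m)) rfl
      have heq : {n ∈ A | Sum.inl n ∉ ({Sum.inl m} : Set (ℕ ⊕ OT))} = A \ {m} := by
        ext x
        simp only [Set.mem_sep_iff, Set.mem_diff, Set.mem_singleton_iff]
        constructor
        · rintro ⟨hx, hne⟩
          refine ⟨hx, fun h => hne (by rw [h])⟩
        · rintro ⟨hx, hne⟩
          refine ⟨hx, fun h => hne (by injection h)⟩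
      rw [heq] at hU
      exact diff_not_mem_vdW hA hsing hU
  | inr α =>
      have hcnt := OT_Iic_countable α
      have hne : (Set.Iic α).Nonempty := ⟨α, Set.mem_Iic.2 (le_refl _)⟩
      obtain ⟨g, hg⟩ := (Set.countable_iff_exists_surjective hne).1 hcnt
      obtain ⟨D, hDA, hDpos, hDfin⟩ := key_lemma hA (fun k => E (g k).val)
        (fun k => hE3 _)
      have hDfin' : ∀ γ, γ ≤ α → (E γ \ ((⋃ γ' ∈ Set.Iic α, E γ') \ D)).Finite := by
        intro γ hγ
        obtain ⟨k, hk⟩ := hg ⟨γ, hγ⟩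
        have hsub : E γ \ ((⋃ γ' ∈ Set.Iic α, E γ') \ D) ⊆ D ∩ E (g k).val := by
          intro x hx
          have hxU : x ∈ ⋃ γ' ∈ Set.Iic α, E γ' := Set.mem_biUnion hγ hx.1
          by_cases hxD : x ∈ D
          · refine ⟨hxD, ?_⟩
            have : (g k).val = γ := by rw [hk]
            rw [this]
            exact hx.1
          · exact absurd ⟨hxU, hxD⟩ hx.2
        exact Set.Finite.subset (Set.Finite.subset (hDfin k) (by
          intro x hx; exact ⟨hx.1, hx.2⟩)) hsub
      set U : Set (ℕ ⊕ OT) := UIic α ((⋃ γ' ∈ Set.Iic α, E γ') \ D) with hUdef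
      have hUopen : IsOpen U := isOpen_theTop.2 (isOp_UIic E α _ hDfin')
      have hαU : Sum.inr α ∈ U := inr_mem_UIic.2 (le_refl _)
      have hmem := hp U hUopen hαU
      have hDsub : D ⊆ {n ∈ A | Sum.inl n ∉ U} := by
        intro n hn
        refine ⟨hDA hn, ?_⟩
        rw [hUdef, inl_mem_UIic]
        intro hmem2
        exact hmem2.2 hn
      exact hDpos (vdW_subset hDsub hmem)



end Stmt11

theorem stmt11 (hCH : Cardinal.continuum = Cardinal.aleph 1) :
    ∃ (X : Type) (_ : TopologicalSpace X), T2Space X ∧ SeqCompactSpace X ∧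
      ¬ CompactSpace X ∧ ¬ BWProp vdWIdeal X := by
  classical
  have hCH0 : Cardinal.continuum.{0} = Cardinal.aleph.{0} 1 := by
    refine Cardinal.lift_injective ?_
    rw [Cardinal.lift_continuum, Cardinal.lift_aleph, Ordinal.lift_one]
    exact hCH
  obtain ⟨𝒜, hgood, hpair, hcatch, huncount⟩ := Stmt11.exists_MAD
  have h1 : Cardinal.mk ↥𝒜 ≤ Cardinal.aleph 1 := by
    calc Cardinal.mk ↥𝒜 ≤ Cardinal.mk (Set ℕ) := Cardinal.mk_set_le 𝒜
    _ = 2 ^ Cardinal.mk ℕ := Cardinal.mk_set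
    _ = 2 ^ Cardinal.aleph0 := by rw [Cardinal.mk_nat]
    _ = Cardinal.continuum := Cardinal.two_power_aleph0
    _ = Cardinal.aleph 1 := hCH0
  have h2 : Cardinal.aleph0 < Cardinal.mk ↥𝒜 := by
    by_contra hcon
    push_neg at hcon
    exact huncount (Cardinal.le_aleph0_iff_set_countable.1 hcon)
  have h3 : Cardinal.mk ↥𝒜 = Cardinal.aleph 1 := by
    refine le_antisymm h1 ?_
    rw [← Cardinal.succ_aleph0]
    exact Order.succ_le_of_lt h2
  have h4 : Cardinal.mk Stmt11.OT = Cardinal.mk ↥𝒜 := by rw [Stmt11.OT_mk, h3]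
  obtain ⟨e⟩ := Cardinal.eq.1 h4
  set E : Stmt11.OT → Set ℕ := fun α => (e α).val with hE
  have hE3 : ∀ α, ¬ HasAPOfLength (E α) 3 := fun α => (hgood _ (e α).2).2
  have hEad : ∀ α β, α ≠ β → (E α ∩ E β).Finite := by
    intro α β hαβ
    apply hpair (e α).2 (e β).2
    intro hval
    exact hαβ (e.injective (Subtype.ext hval))
  have hEcatch : ∀ C : Set ℕ, C.Infinite → ∃ α, (C ∩ E α).Infinite := by
    intro C hC
    obtain ⟨S, hS𝒜, hint⟩ := hcatch C hC
    refine ⟨e.symm ⟨S, hS𝒜⟩, ?_⟩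
    have hES : E (e.symm ⟨S, hS𝒜⟩) = S := by
      rw [hE]
      simp only [Equiv.apply_symm_apply]
    rw [hES]
    exact hint
  exact ⟨ℕ ⊕ Stmt11.OT, Stmt11.theTop E, Stmt11.t2_theTop E hEad,
    Stmt11.seqCompact_theTop E hEcatch, Stmt11.noncompact_theTop E,
    Stmt11.noBW_theTop E hE3⟩
end

section
/- A topological space has the BW(Fin ⊗ Fin) property if and only if it is sequentially compact, where Fin ⊗ Fin is the Fubini product of Fin with itself (an ideal on ω × ω). -/
open Set Filter Topology

/-- The Fubini product `I ⊗ J` of ideals, an ideal on `M × N`. -/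
def fubiniProd {M N : Type*} (I : Set (Set M)) (J : Set (Set N)) : Set (Set (M × N)) :=
  {A | {m : M | {n : N | (m, n) ∈ A} ∉ J} ∈ I}

theorem stmt12 (X : Type*) [TopologicalSpace X] :
    BWProp (fubiniProd FinIdeal FinIdeal) X ↔ SeqCompactSpace X := by
  have memI : ∀ A : Set (ℕ × ℕ),
      A ∈ fubiniProd FinIdeal FinIdeal ↔ {m | ¬ {n | (m, n) ∈ A}.Finite}.Finite := fun _ => Iff.rfl
  constructor
  · intro h
    refine ⟨fun {y} _ => ?_⟩
    obtain ⟨A, hA, p, hp⟩ := h (fun q => y q.1)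
    set S := {m | ¬ {n | (m, n) ∈ A}.Finite} with hSdef
    have hS : S.Infinite := fun hfin => hA ((memI A).mpr hfin)
    have key : ∀ U : Set X, IsOpen U → p ∈ U → {m ∈ S | y m ∉ U}.Finite := by
      intro U hU hpU
      have hT : {m | ¬ {n | (m, n) ∈ {q ∈ A | y q.1 ∉ U}}.Finite}.Finite :=
        (memI _).mp (hp U hU hpU)
      refine hT.subset ?_
      rintro m ⟨hmS, hmU⟩
      simp only [mem_setOf_eq] at hmS ⊢
      intro hfin
      exact hmS (hfin.subset (fun n hn => ⟨hn, hmU⟩))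
    have hnth : StrictMono (Nat.nth (· ∈ S)) := Nat.nth_strictMono hS
    refine ⟨p, mem_univ p, Nat.nth (· ∈ S), hnth, ?_⟩
    rw [tendsto_nhds]
    intro U hU hpU
    obtain ⟨N, hN⟩ := (key U hU hpU).bddAbove
    filter_upwards [Filter.eventually_ge_atTop (N + 1)] with k hk
    have hmem : Nat.nth (· ∈ S) k ∈ S := Nat.nth_mem_of_infinite hS k
    by_contra hbad
    have : Nat.nth (· ∈ S) k ≤ N := hN ⟨hmem, hbad⟩
    have : k ≤ N := le_trans (hnth.le_apply) this
    omega
  · intro hsc x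
    have H : ∀ m : ℕ, ∃ p : X, ∃ φ : ℕ → ℕ, StrictMono φ ∧
        Tendsto (fun k => x (m, φ k)) atTop (𝓝 p) := by
      intro m
      obtain ⟨a, -, φ, hφ, hconv⟩ :=
        hsc.isSeqCompact_univ (x := fun n => x (m, n)) (fun n => mem_univ _)
      exact ⟨a, φ, hφ, hconv⟩
    choose p φ hφ hconv using H
    obtain ⟨q, -, ψ, hψ, hq⟩ := hsc.isSeqCompact_univ (x := p) (fun n => mem_univ _)
    set A : Set (ℕ × ℕ) := {r | ∃ j k, r = (ψ j, φ (ψ j) k)} with hAdef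
    have hmemA : ∀ j k, (ψ j, φ (ψ j) k) ∈ A := fun j k => ⟨j, k, rfl⟩
    refine ⟨A, ?_, q, ?_⟩
    · intro hfin
      rw [memI] at hfin
      have hsub : range ψ ⊆ {m | ¬ {n | (m, n) ∈ A}.Finite} := by
        rintro m ⟨j, rfl⟩
        simp only [mem_setOf_eq]
        intro hf
        have : range (φ (ψ j)) ⊆ {n | (ψ j, n) ∈ A} := by
          rintro n ⟨k, rfl⟩
          exact hmemA j k
        exact (infinite_range_of_injective (hφ (ψ j)).injective) (hf.subset this)
      exact (infinite_range_of_injective hψ.injective) (hfin.subset hsub)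
    · intro U hU hqU
      rw [memI]
      have := (tendsto_nhds.mp hq) U hU hqU
      obtain ⟨J, hJ⟩ := eventually_atTop.mp this
      have hsub : {m | ¬ {n | (m, n) ∈ {r ∈ A | x r ∉ U}}.Finite} ⊆ ψ '' (Set.Iio J) := by
        intro m hm
        simp only [mem_setOf_eq] at hm
        have hm' : Set.Infinite {n | (m, n) ∈ {r ∈ A | x r ∉ U}} := hm
        obtain ⟨n, hnA, -⟩ := hm'.nonempty
        obtain ⟨j, k0, hjk⟩ := hnA
        have hmj : m = ψ j := (Prod.mk.injEq _ _ _ _ ▸ hjk).1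
        refine ⟨j, ?_, hmj.symm⟩
        simp only [Set.mem_Iio]
        by_contra hjJ
        push_neg at hjJ
        have hpU : p (ψ j) ∈ U := hJ j hjJ
        obtain ⟨K, hK⟩ := eventually_atTop.mp ((tendsto_nhds.mp (hconv (ψ j))) U hU hpU)
        apply hm
        subst hmj
        have : {n | (ψ j, n) ∈ {r ∈ A | x r ∉ U}} ⊆ (φ (ψ j)) '' (Set.Iio K) := by
          rintro n ⟨⟨j', k, hjk'⟩, hxU⟩
          obtain ⟨h1, h2⟩ := Prod.mk.injEq _ _ _ _ ▸ hjk'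
          have hj' : j' = j := hψ.injective h1.symm
          subst hj'
          refine ⟨k, ?_, h2.symm⟩
          simp only [Set.mem_Iio]
          by_contra hkK
          push_neg at hkK
          exact hxU (h2 ▸ hK k hkK)
        exact (((Set.finite_Iio K).image _).subset this)
      exact ((Set.finite_Iio J).image _).subset hsub
end

section
/- Fin ≰_BW I_{1/n}, i.e., the relation Fin ≤_BW I_{1/n} fails for the summable ideal I_{1/n}. -/
open Set Filter Topology

/-- The summable ideal `I_{1/n}`. -/
def summableIdeal : Set (Set ℕ) :=
  {A : Set ℕ | Summable (A.indicator fun n => (1 : ℝ) / (n + 1))}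

open MeasureTheory ENNReal NNReal

/-! ### The weight function and the associated measure -/

noncomputable def w : ℕ → ℝ≥0∞ := fun n => ((n : ℝ≥0∞) + 1)⁻¹

lemma w_ne_top (n : ℕ) : w n ≠ ⊤ := by simp [w]

lemma w_pos (n : ℕ) : 0 < w n := by
  simp only [w, ENNReal.inv_pos]
  exact ne_of_lt (by exact_mod_cast lt_top_iff_ne_top.2 (by simp))

lemma w_anti : ∀ {m n : ℕ}, m ≤ n → w n ≤ w m := by
  intro m n h
  apply ENNReal.inv_le_inv.2
  exact add_le_add_left (by exact_mod_cast h) 1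

noncomputable def mu : Measure ℕ := Measure.sum (fun n => (w n) • Measure.dirac n)

lemma mu_apply (A : Set ℕ) : mu A = ∑' n, A.indicator w n := by
  rw [mu, Measure.sum_apply _ (MeasurableSet.of_discrete)]
  congr 1; funext n
  rw [Measure.smul_apply, Measure.dirac_apply' _ (MeasurableSet.of_discrete)]
  by_cases h : n ∈ A <;> simp [h]

noncomputable def v : ℕ → ℝ≥0 := fun n => ((n : ℝ≥0) + 1)⁻¹

lemma v_coe (n : ℕ) : ((v n : ℝ≥0) : ℝ) = 1 / ((n : ℝ) + 1) := by
  simp [v, one_div]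

lemma v_coe_ennreal (n : ℕ) : ((v n : ℝ≥0) : ℝ≥0∞) = w n := by
  rw [v, w, ENNReal.coe_inv (by positivity)]
  push_cast
  rfl

lemma mem_summableIdeal_iff (A : Set ℕ) : A ∈ summableIdeal ↔ mu A ≠ ⊤ := by
  have h1 : (A.indicator fun n => (1 : ℝ) / (n + 1)) = fun n => ((A.indicator v n : ℝ≥0) : ℝ) := by
    funext n; by_cases h : n ∈ A <;> simp [h, v_coe]
  have h2 : mu A = ∑' n, ((A.indicator v n : ℝ≥0) : ℝ≥0∞) := by
    rw [mu_apply]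
    congr 1; funext n; by_cases h : n ∈ A <;> simp [h, v_coe_ennreal]
  rw [summableIdeal, Set.mem_setOf_eq, h1, h2]
  exact (ENNReal.tsum_coe_ne_top_iff_summable_coe).symm

lemma mu_univ_eq_top : mu (Set.univ : Set ℕ) = ⊤ := by
  by_contra h
  have hs := (mem_summableIdeal_iff Set.univ).2 h
  rw [summableIdeal, Set.mem_setOf_eq, Set.indicator_univ] at hs
  have h3 : Summable (fun n : ℕ => 1 / ((((n : ℕ) + 1 : ℕ)) : ℝ)) := by push_cast; exact hs
  exact Real.not_summable_one_div_natCast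
    ((summable_nat_add_iff (f := fun n : ℕ => 1 / (n : ℝ)) 1).1 h3)

lemma tsum_w_eq_top : ∑' n, w n = ⊤ := by
  have := mu_univ_eq_top
  rwa [mu_apply, Set.indicator_univ] at this

lemma mu_singleton (n : ℕ) : mu {n} = w n := by
  rw [mu_apply]
  rw [tsum_eq_single n (by intro m hm; simp [Set.indicator, hm])]
  simp

lemma mu_finset (D : Finset ℕ) : mu ↑D = ∑ n ∈ D, w n := by
  have : (↑D : Set ℕ) = ⋃ n ∈ D, {n} := by ext n; simp
  rw [this, measure_biUnion_finset ?_ (fun _ _ => MeasurableSet.of_discrete)]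
  · simp [mu_singleton]
  · intro a _ b _ hab
    simp [Function.onFun, Set.disjoint_singleton, hab]

lemma sum_w_ne_top (D : Finset ℕ) : ∑ n ∈ D, w n ≠ ⊤ :=
  (ENNReal.sum_lt_top.2 (fun n _ => lt_top_iff_ne_top.2 (w_ne_top n))).ne

lemma mu_compl_eq_top {T : Set ℕ} (hT : mu T ≠ ⊤) : mu Tᶜ = ⊤ := by
  by_contra h
  have h1 : mu (Set.univ : Set ℕ) ≤ mu T + mu Tᶜ := by
    rw [← Set.union_compl_self T]; exact measure_union_le T Tᶜ
  rw [mu_univ_eq_top, top_le_iff] at h1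
  exact (ENNReal.add_ne_top.2 ⟨hT, h⟩) h1

/-! ### Extracting chunks of controlled measure -/

lemma shrink (δ : ℝ≥0∞) (hδ0 : 0 < δ) :
    ∀ (k : ℕ) (D : Finset ℕ), D.card = k → (∀ n ∈ D, w n ≤ δ) → δ ≤ ∑ n ∈ D, w n →
    ∃ D' : Finset ℕ, D' ⊆ D ∧ δ ≤ ∑ n ∈ D', w n ∧ ∑ n ∈ D', w n ≤ 2 * δ := by
  intro k
  induction k with
  | zero =>
    intro D hc _ hge
    rw [Finset.card_eq_zero.1 hc] at hge
    simp at hge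
    exact absurd hge hδ0.ne'
  | succ k ih =>
    intro D hc hw hge
    by_cases h2 : ∑ n ∈ D, w n ≤ 2 * δ
    · exact ⟨D, le_refl _, hge, h2⟩
    · push_neg at h2
      have hne : D.Nonempty := Finset.card_pos.1 (hc ▸ k.succ_pos)
      obtain ⟨x, hx⟩ := hne
      have herase : ∑ n ∈ D.erase x, w n + w x = ∑ n ∈ D, w n := Finset.sum_erase_add _ _ hx
      have hge' : δ ≤ ∑ n ∈ D.erase x, w n := by
        have h1 : δ + w x ≤ ∑ n ∈ D.erase x, w n + w x := by
          rw [herase]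
          calc δ + w x ≤ δ + δ := add_le_add_right (hw x hx) δ
          _ = 2 * δ := (two_mul δ).symm
          _ ≤ ∑ n ∈ D, w n := h2.le
        exact (ENNReal.add_le_add_iff_right (w_ne_top x)).1 h1
      obtain ⟨D', hD'sub, h⟩ := ih (D.erase x) (by rw [Finset.card_erase_of_mem hx, hc]; rfl)
        (fun n hn => hw n (Finset.erase_subset _ _ hn)) hge'
      exact ⟨D', hD'sub.trans (Finset.erase_subset _ _), h⟩

lemma exists_finset_of_mu_top {S : Set ℕ} (hS : mu S = ⊤) (δ : ℝ≥0∞) (hδ : δ ≠ ⊤) :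
    ∃ F : Finset ℕ, ↑F ⊆ S ∧ δ ≤ ∑ n ∈ F, w n := by
  classical
  have h1 : (⊤ : ℝ≥0∞) = ⨆ F : Finset ℕ, ∑ n ∈ F, S.indicator w n := by
    rw [← hS, mu_apply]; exact ENNReal.tsum_eq_iSup_sum
  have h2 : δ < ⨆ F : Finset ℕ, ∑ n ∈ F, S.indicator w n := h1 ▸ hδ.lt_top
  obtain ⟨F, hF⟩ := lt_iSup_iff.1 h2
  refine ⟨F.filter (· ∈ S), by intro n hn; simpa using (Finset.mem_filter.1 hn).2, ?_⟩
  refine le_trans hF.le (le_of_eq ?_)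
  rw [Finset.sum_filter]
  refine Finset.sum_congr rfl (fun n _ => ?_)
  by_cases h : n ∈ S <;> simp [h]

lemma exists_chunk (f : ℕ → ℕ) (hfib : ∀ b, mu (f ⁻¹' {b}) ≠ ⊤) (E : Finset ℕ) (j : ℕ) :
    ∃ D : Finset ℕ, (∀ n ∈ D, f n ∉ f '' (↑E : Set ℕ)) ∧
      w j ≤ ∑ n ∈ D, w n ∧ ∑ n ∈ D, w n ≤ 2 * w j := by
  classical
  set T : Set ℕ := (⋃ m ∈ E, f ⁻¹' {f m}) ∪ ↑(Finset.range j) with hTdef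
  have hT : mu T ≠ ⊤ := by
    have h1 : mu (⋃ m ∈ E, f ⁻¹' {f m}) ≤ ∑ m ∈ E, mu (f ⁻¹' {f m}) :=
      measure_biUnion_finset_le _ _
    have h2 : mu T ≤ mu (⋃ m ∈ E, f ⁻¹' {f m}) + mu ↑(Finset.range j) := measure_union_le _ _
    refine ne_top_of_le_ne_top (ENNReal.add_ne_top.2 ⟨ne_top_of_le_ne_top ?_ h1, ?_⟩) h2
    · exact (ENNReal.sum_lt_top.2 (fun m _ => (hfib (f m)).lt_top)).ne
    · rw [mu_finset]; exact sum_w_ne_top _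
  have hS : mu Tᶜ = ⊤ := mu_compl_eq_top hT
  obtain ⟨F, hFS, hF⟩ := exists_finset_of_mu_top hS (w j) (w_ne_top j)
  have hmemT : ∀ n ∈ F, f n ∉ f '' (↑E : Set ℕ) ∧ j ≤ n := by
    intro n hn
    have hT' : n ∉ (⋃ m ∈ E, f ⁻¹' {f m}) ∪ ↑(Finset.range j) := hFS hn
    constructor
    · rintro ⟨m, hm, hfm⟩
      refine hT' (Or.inl (Set.mem_iUnion₂.2 ⟨m, Finset.mem_coe.1 hm, ?_⟩))
      show f n ∈ ({f m} : Set ℕ)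
      rw [hfm]
      exact rfl
    · by_contra h
      exact hT' (Or.inr (by simp; omega))
  have hwF : ∀ n ∈ F, w n ≤ w j := fun n hn => w_anti (hmemT n hn).2
  obtain ⟨D, hD, h1, h2⟩ := shrink (w j) (w_pos j) F.card F rfl hwF hF
  exact ⟨D, fun n hn => (hmemT n (hD hn)).1, h1, h2⟩

/-! ### The recursive construction -/

section Construction

variable (f : ℕ → ℕ) (hfib : ∀ b, mu (f ⁻¹' {b}) ≠ ⊤)

noncomputable def chunk (E : Finset ℕ) (j : ℕ) : Finset ℕ :=
  (exists_chunk f hfib E j).choose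

lemma chunk_spec (E : Finset ℕ) (j : ℕ) :
    (∀ n ∈ chunk f hfib E j, f n ∉ f '' (↑E : Set ℕ)) ∧
      w j ≤ ∑ n ∈ chunk f hfib E j, w n ∧ ∑ n ∈ chunk f hfib E j, w n ≤ 2 * w j :=
  (exists_chunk f hfib E j).choose_spec

noncomputable def acc : ℕ → Finset ℕ
  | 0 => ∅
  | j + 1 => acc j ∪ chunk f hfib (acc j) j

noncomputable def Dj (j : ℕ) : Finset ℕ := chunk f hfib (acc f hfib j) j

lemma Dj_subset_acc (j : ℕ) : Dj f hfib j ⊆ acc f hfib (j + 1) := by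
  rw [acc]; exact Finset.subset_union_right

lemma acc_mono : ∀ {i j : ℕ}, i ≤ j → acc f hfib i ⊆ acc f hfib j := by
  intro i j h
  induction h with
  | refl => exact Finset.Subset.refl _
  | step h ih => exact ih.trans (by rw [acc]; exact Finset.subset_union_left)

lemma Dj_fresh (j : ℕ) : ∀ n ∈ Dj f hfib j, f n ∉ f '' (↑(acc f hfib j) : Set ℕ) :=
  (chunk_spec f hfib (acc f hfib j) j).1

lemma Dj_lower (j : ℕ) : w j ≤ ∑ n ∈ Dj f hfib j, w n :=
  (chunk_spec f hfib (acc f hfib j) j).2.1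

lemma Dj_upper (j : ℕ) : ∑ n ∈ Dj f hfib j, w n ≤ 2 * w j :=
  (chunk_spec f hfib (acc f hfib j) j).2.2

lemma Dj_image_ne {i j : ℕ} (hij : i < j) {n m : ℕ}
    (hn : n ∈ Dj f hfib j) (hm : m ∈ Dj f hfib i) : f n ≠ f m := by
  intro h
  apply Dj_fresh f hfib j n hn
  exact ⟨m, acc_mono f hfib hij (Dj_subset_acc f hfib i hm), h.symm⟩

noncomputable def bigA : Set ℕ := ⋃ j, (↑(Dj f hfib j) : Set ℕ)

lemma Dj_disjoint {i j : ℕ} (hij : i ≠ j) {n : ℕ}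
    (hn : n ∈ Dj f hfib i) (hm : n ∈ Dj f hfib j) : False := by
  rcases hij.lt_or_gt with h | h
  · exact Dj_image_ne f hfib h hm hn rfl
  · exact Dj_image_ne f hfib h hn hm rfl

lemma mu_bigA : mu (bigA f hfib) = ⊤ := by
  have hdisj : Pairwise (Function.onFun Disjoint (fun j => (↑(Dj f hfib j) : Set ℕ))) := by
    intro i j hij
    rw [Function.onFun, Set.disjoint_left]
    intro n hn hm
    exact Dj_disjoint f hfib hij hn hm
  have h1 : mu (bigA f hfib) = ∑' j, mu ↑(Dj f hfib j) :=
    measure_iUnion hdisj (fun _ => MeasurableSet.of_discrete)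
  rw [h1, eq_top_iff, ← tsum_w_eq_top]
  exact ENNReal.tsum_le_tsum (fun j => by rw [mu_finset]; exact Dj_lower f hfib j)

lemma bigA_fiber_subset {b j n : ℕ} (hn : n ∈ Dj f hfib j) (hfn : f n = b) :
    bigA f hfib ∩ f ⁻¹' {b} ⊆ ↑(Dj f hfib j) := by
  rintro m ⟨hmA, hmb⟩
  obtain ⟨i, hi⟩ := Set.mem_iUnion.1 hmA
  have hi' : m ∈ Dj f hfib i := hi
  rcases eq_or_ne i j with rfl | hij
  · exact hi'
  · exfalso
    have : f m = f n := by
      simp only [Set.mem_preimage, Set.mem_singleton_iff] at hmb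
      rw [hmb, hfn]
    rcases hij.lt_or_gt with h | h
    · exact Dj_image_ne f hfib h hn hi' this.symm
    · exact Dj_image_ne f hfib h hi' hn this

lemma heavy_finite (δ : ℝ≥0∞) (hδ0 : δ ≠ 0) (hδt : δ ≠ ⊤) :
    {b : ℕ | δ ≤ mu (bigA f hfib ∩ f ⁻¹' {b})}.Finite := by
  have hδ2 : δ / 2 ≠ 0 := by
    simp [ENNReal.div_eq_zero_iff, hδ0]
  obtain ⟨n₀, hn₀⟩ := ENNReal.exists_inv_nat_lt hδ2
  apply Set.Finite.subset ((acc f hfib n₀).finite_toSet.image f)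
  intro b hb
  have hb' : δ ≤ mu (bigA f hfib ∩ f ⁻¹' {b}) := hb
  have hne : (bigA f hfib ∩ f ⁻¹' {b}).Nonempty := by
    rw [Set.nonempty_iff_ne_empty]
    intro h
    rw [h, measure_empty] at hb'
    exact hδ0 (le_zero_iff.1 hb')
  obtain ⟨n, hnA, hnb⟩ := hne
  obtain ⟨j, hj⟩ := Set.mem_iUnion.1 hnA
  have hj' : n ∈ Dj f hfib j := hj
  have hfn : f n = b := hnb
  have hupper : mu (bigA f hfib ∩ f ⁻¹' {b}) ≤ 2 * w j := by
    calc mu (bigA f hfib ∩ f ⁻¹' {b}) ≤ mu ↑(Dj f hfib j) :=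
          measure_mono (bigA_fiber_subset f hfib hj' hfn)
    _ = ∑ n ∈ Dj f hfib j, w n := mu_finset _
    _ ≤ 2 * w j := Dj_upper f hfib j
  have hjlt : j < n₀ := by
    by_contra h
    push_neg at h
    have hw : w j ≤ ((n₀ : ℝ≥0∞))⁻¹ := by
      rw [w]
      apply ENNReal.inv_le_inv.2
      exact_mod_cast le_trans (by exact_mod_cast h) (Nat.le_succ j)
    have : δ < δ := by
      calc δ ≤ mu (bigA f hfib ∩ f ⁻¹' {b}) := hb'
      _ ≤ 2 * w j := hupper
      _ ≤ 2 * (n₀ : ℝ≥0∞)⁻¹ := by gcongr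
      _ < 2 * (δ / 2) := by
          rw [ENNReal.mul_lt_mul_iff_right (by norm_num) (by norm_num)]
          exact hn₀
      _ = δ := ENNReal.mul_div_cancel' (by norm_num) (by norm_num)
    exact lt_irrefl δ this
  refine ⟨n, ?_, hfn⟩
  exact acc_mono f hfib hjlt (Dj_subset_acc f hfib j hj')

end Construction

/-! ### Choosing the thin set `C` -/

lemma exists_seq (B : Set ℕ) (hB : B.Infinite) (bad : ℕ → Set ℕ) (hbad : ∀ k, (bad k).Finite) :
    ∃ g : ℕ → ℕ, StrictMono g ∧ ∀ k, g k ∈ B ∧ g k ∉ bad k := by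
  have hinf : ∀ k, (B \ bad k).Infinite := fun k => hB.diff (hbad k)
  classical
  let g : ℕ → ℕ := fun k => Nat.rec ((hinf 0).nonempty.choose)
    (fun k x => ((hinf (k + 1)).exists_gt x).choose) k
  have hg0 : g 0 ∈ B \ bad 0 := (hinf 0).nonempty.choose_spec
  have hgs : ∀ k, g (k + 1) ∈ B \ bad (k + 1) ∧ g k < g (k + 1) := by
    intro k
    have h := ((hinf (k + 1)).exists_gt (g k)).choose_spec
    exact ⟨h.1, h.2⟩
  refine ⟨g, strictMono_nat_of_lt_succ (fun k => (hgs k).2), ?_⟩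
  intro k
  cases k with
  | zero => exact ⟨hg0.1, hg0.2⟩
  | succ k => exact ⟨(hgs k).1.1, (hgs k).1.2⟩

theorem stmt13 : ¬ BWle FinIdeal summableIdeal := by
  rintro ⟨f, hf⟩
  by_cases hfib : ∀ b, mu (f ⁻¹' {b}) ≠ ⊤
  · -- main case: all fibers have finite measure
    set A := bigA f hfib with hA
    have hApos : A ∉ summableIdeal := by
      rw [mem_summableIdeal_iff, mu_bigA]
      simp
    obtain ⟨B, hBsub, hBpos, hBkey⟩ := hf A hApos
    have hBinf : B.Infinite := hBpos
    -- choose the thin sequence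
    obtain ⟨g, hgmono, hgspec⟩ := exists_seq B hBinf
      (fun k => {b : ℕ | (2 : ℝ≥0∞)⁻¹ ^ k ≤ mu (A ∩ f ⁻¹' {b})})
      (fun k => heavy_finite f hfib _
        (pow_ne_zero _ (ENNReal.inv_ne_zero.2 (by norm_num)))
        (ENNReal.pow_ne_top (by simp)))
    set C := Set.range g with hC
    have hCB : C ⊆ B := by rintro _ ⟨k, rfl⟩; exact (hgspec k).1
    have hCinf : C.Infinite := Set.infinite_range_of_injective hgmono.injective
    have hCpos : C ∩ B ∉ FinIdeal := by
      rw [Set.inter_eq_left.2 hCB]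
      exact hCinf
    have hsmall : A ∩ f ⁻¹' C ∈ summableIdeal := by
      rw [mem_summableIdeal_iff]
      have hsub : A ∩ f ⁻¹' C = ⋃ k, A ∩ f ⁻¹' {g k} := by
        ext n
        simp [hC, Set.mem_iUnion, and_comm, eq_comm]
      rw [hsub]
      have h1 : mu (⋃ k, A ∩ f ⁻¹' {g k}) ≤ ∑' k, mu (A ∩ f ⁻¹' {g k}) :=
        measure_iUnion_le _
      have h2 : ∑' k, mu (A ∩ f ⁻¹' {g k}) ≤ ∑' k : ℕ, (2 : ℝ≥0∞)⁻¹ ^ k := by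
        apply ENNReal.tsum_le_tsum
        intro k
        by_contra h
        push_neg at h
        exact (hgspec k).2 h.le
      have h3 : ∑' k : ℕ, (2 : ℝ≥0∞)⁻¹ ^ k ≠ ⊤ := by
        rw [ENNReal.tsum_geometric]
        simp [ENNReal.inv_ne_top]
      exact ne_top_of_le_ne_top h3 (h1.trans h2)
    exact hBkey C hCpos hsmall
  · -- some fiber has infinite measure
    push_neg at hfib
    obtain ⟨b, hb⟩ := hfib
    have hApos : f ⁻¹' {b} ∉ summableIdeal := by
      rw [mem_summableIdeal_iff, hb]; simp
    obtain ⟨B, hBsub, hBpos, _⟩ := hf (f ⁻¹' {b}) hApos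
    apply hBpos
    have : B ⊆ {b} := hBsub.trans (Set.image_preimage_subset f {b})
    exact (Set.finite_singleton b).subset this
end

section
/- Fin ≰_BW ED_-, i.e., the relation Fin ≤_BW ED_- fails, where ED_- = {A ⊆ ω × ω : ∃ k ∈ ω ∀ n ∈ ω, |{m ∈ ω : (n,m) ∈ A}| ≤ k}. -/
open Set Filter Topology

/-- Accumulated set of values used by the recursive choice. -/
noncomputable def usedF (f : ℕ × ℕ → ℕ)
    (h : ∀ (n : ℕ) (F : Finset ℕ), ∃ m : ℕ, f (n, m) ∉ F) : ℕ → Finset ℕ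
  | 0 => ∅
  | j + 1 => usedF f h j ∪ {f (Nat.sqrt j, Classical.choose (h (Nat.sqrt j) (usedF f h j)))}

noncomputable def pSeq (f : ℕ × ℕ → ℕ)
    (h : ∀ (n : ℕ) (F : Finset ℕ), ∃ m : ℕ, f (n, m) ∉ F) (j : ℕ) : ℕ :=
  Classical.choose (h (Nat.sqrt j) (usedF f h j))

theorem usedF_mono (f : ℕ × ℕ → ℕ)
    (h : ∀ (n : ℕ) (F : Finset ℕ), ∃ m : ℕ, f (n, m) ∉ F) {i j : ℕ} (hij : i ≤ j) :
    usedF f h i ⊆ usedF f h j := by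
  induction j with
  | zero => simp_all
  | succ j ih =>
    rcases hij.lt_or_eq with h1 | rfl
    · exact (ih (Nat.lt_succ_iff.mp h1)).trans
        (by rw [usedF]; exact Finset.subset_union_left)
    · rfl

theorem pSeq_spec (f : ℕ × ℕ → ℕ)
    (h : ∀ (n : ℕ) (F : Finset ℕ), ∃ m : ℕ, f (n, m) ∉ F) {i j : ℕ} (hij : i < j) :
    f (Nat.sqrt j, pSeq f h j) ≠ f (Nat.sqrt i, pSeq f h i) := by
  have hs : f (Nat.sqrt j, pSeq f h j) ∉ usedF f h j :=
    Classical.choose_spec (h (Nat.sqrt j) (usedF f h j))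
  intro heq
  apply hs
  apply usedF_mono f h hij
  rw [usedF, heq]
  exact Finset.mem_union_right _ (Finset.mem_singleton_self _)

theorem pSeq_inj (f : ℕ × ℕ → ℕ)
    (h : ∀ (n : ℕ) (F : Finset ℕ), ∃ m : ℕ, f (n, m) ∉ F) :
    Function.Injective (fun j => f (Nat.sqrt j, pSeq f h j)) := by
  intro i j hij
  by_contra hne
  rcases Nat.lt_or_ge i j with h1 | h1
  · exact pSeq_spec f h h1 hij.symm
  · exact pSeq_spec f h (Nat.lt_of_le_of_ne h1 (Ne.symm hne)) hij

/-- The ideal `ED₋` on `ω × ω`: sets with uniformly bounded vertical sections. -/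
def EDminus : Set (Set (ℕ × ℕ)) :=
  {A : Set (ℕ × ℕ) | ∃ k : ℕ, ∀ n : ℕ, {m : ℕ | (n, m) ∈ A}.encard ≤ (k : ℕ∞)}

theorem stmt14 : ¬ BWle FinIdeal EDminus := by
  rintro ⟨f, hf⟩
  by_cases hI : ∀ n : ℕ, (Set.range fun m => f (n, m)).Infinite
  · -- every column has infinite range: build a set on which f is injective
    have h : ∀ (n : ℕ) (F : Finset ℕ), ∃ m : ℕ, f (n, m) ∉ F := by
      intro n F
      obtain ⟨a, ⟨m, rfl⟩, ha⟩ := (hI n).exists_notMem_finset F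
      exact ⟨m, ha⟩
    set P : ℕ → ℕ := pSeq f h with hP
    set p : ℕ → ℕ × ℕ := fun j => (Nat.sqrt j, P j) with hp
    have Finj : Function.Injective (fun j => f (p j)) := pSeq_inj f h
    have pinj : Function.Injective p := fun i j hij => Finj (congrArg f hij)
    set A : Set (ℕ × ℕ) := Set.range p with hA
    have hApos : A ∉ EDminus := by
      rintro ⟨k, hk⟩
      have hk' := hk k
      have hsq : ∀ j ∈ Finset.Icc (k*k) (k*k+k), Nat.sqrt j = k := by
        intro j hj
        rw [Finset.mem_Icc] at hj
        have hkk : (k+1)*(k+1) = k*k + 2*k + 1 := by ring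
        exact (Nat.eq_sqrt.mpr ⟨hj.1, by omega⟩).symm
      set T : Finset ℕ := (Finset.Icc (k*k) (k*k+k)).image P with hT
      have hTcard : T.card = k + 1 := by
        rw [hT, Finset.card_image_of_injOn, Nat.card_Icc]
        · omega
        · intro j1 hj1 j2 hj2 hj
          apply pinj
          rw [hp]
          simp only
          rw [hsq j1 hj1, hsq j2 hj2, hj]
      have hTsub : (T : Set ℕ) ⊆ {m : ℕ | (k, m) ∈ A} := by
        intro x hx
        simp only [hT, Finset.coe_image, Set.mem_image, Finset.mem_coe] at hx
        obtain ⟨j, hj, rfl⟩ := hx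
        exact ⟨j, by rw [hp]; simp only; rw [hsq j hj]⟩
      have hle : ((k + 1 : ℕ) : ℕ∞) ≤ (k : ℕ∞) := by
        calc ((k + 1 : ℕ) : ℕ∞) = (T : Set ℕ).encard := by
              rw [Set.encard_coe_eq_coe_finsetCard, hTcard]
          _ ≤ {m : ℕ | (k, m) ∈ A}.encard := Set.encard_mono hTsub
          _ ≤ (k : ℕ∞) := hk'
      have : k + 1 ≤ k := by exact_mod_cast hle
      omega
    obtain ⟨B, hBA, hBI, hprop⟩ := hf A hApos
    have hBinf : B.Infinite := hBI
    have hBrange : ∀ b ∈ B, ∃ j, f (p j) = b := by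
      intro b hb
      obtain ⟨a, ⟨j, rfl⟩, rfl⟩ := hBA hb
      exact ⟨j, rfl⟩
    classical
    set q : ℕ → ℕ := fun b => if hb : ∃ j, f (p j) = b then hb.choose else 0 with hq
    have hqspec : ∀ b ∈ B, f (p (q b)) = b := by
      intro b hb
      have hb' := hBrange b hb
      simp only [hq, dif_pos hb']
      exact hb'.choose_spec
    set col : ℕ → ℕ := fun b => Nat.sqrt (q b) with hcol
    have hfib : ∀ v : ℕ, {b ∈ B | col b = v}.Finite := by
      intro v
      apply Set.Finite.subset
        (Set.Finite.image (fun j => f (p j)) (Set.finite_Icc (v*v) (v*v+2*v)))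
      rintro b ⟨hbB, hbv⟩
      refine ⟨q b, ?_, hqspec b hbB⟩
      have h1 : Nat.sqrt (q b) * Nat.sqrt (q b) ≤ q b := Nat.sqrt_le (q b)
      have h2 : q b < (Nat.sqrt (q b) + 1) * (Nat.sqrt (q b) + 1) := Nat.lt_succ_sqrt (q b)
      have hbv' : Nat.sqrt (q b) = v := hbv
      rw [hbv'] at h1 h2
      have : (v+1)*(v+1) = v*v + 2*v + 1 := by ring
      exact Set.mem_Icc.mpr ⟨h1, by omega⟩
    have himg : (col '' B).Infinite := by
      by_contra hfin
      rw [Set.not_infinite] at hfin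
      apply hBinf
      apply Set.Finite.subset (Set.Finite.biUnion hfin (fun v _ => hfib v))
      intro b hb
      exact Set.mem_biUnion ⟨b, hb, rfl⟩ ⟨hb, rfl⟩
    set sel : ℕ → ℕ := fun v => if hv : ∃ b, b ∈ B ∧ col b = v then hv.choose else 0 with hsel
    have hselspec : ∀ v ∈ col '' B, sel v ∈ B ∧ col (sel v) = v := by
      rintro v ⟨b, hb, rfl⟩
      have hv' : ∃ b', b' ∈ B ∧ col b' = col b := ⟨b, hb, rfl⟩
      simp only [hsel, dif_pos hv']
      exact hv'.choose_spec
    set C : Set ℕ := sel '' (col '' B) with hC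
    have hCB : C ⊆ B := by rintro c ⟨v, hv, rfl⟩; exact (hselspec v hv).1
    have hcolinj : Set.InjOn col C := by
      rintro c1 ⟨v1, hv1, rfl⟩ c2 ⟨v2, hv2, rfl⟩ hc
      rw [(hselspec v1 hv1).2, (hselspec v2 hv2).2] at hc
      rw [hc]
    have hselinj : Set.InjOn sel (col '' B) := by
      intro v1 hv1 v2 hv2 hv
      rw [← (hselspec v1 hv1).2, ← (hselspec v2 hv2).2, hv]
    have hCinf : C.Infinite := (Set.infinite_image_iff hselinj).mpr himg
    have hCpos : C ∩ B ∉ FinIdeal := by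
      rw [Set.inter_eq_self_of_subset_left hCB]
      exact hCinf
    apply hprop C hCpos
    refine ⟨1, fun n => ?_⟩
    have h1 : ((1 : ℕ) : ℕ∞) = 1 := by norm_cast
    rw [h1, Set.encard_le_one_iff]
    intro m1 m2 hm1 hm2
    obtain ⟨⟨j1, hj1⟩, hc1⟩ := hm1
    obtain ⟨⟨j2, hj2⟩, hc2⟩ := hm2
    -- hj1 : p j1 = (n, m1), hc1 : f (n, m1) ∈ C
    have hc1B : f (n, m1) ∈ B := hCB hc1
    have hc2B : f (n, m2) ∈ B := hCB hc2
    have hq1 : q (f (n, m1)) = j1 := Finj (by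
      show f (p (q (f (n, m1)))) = f (p j1)
      rw [hqspec _ hc1B, hj1])
    have hq2 : q (f (n, m2)) = j2 := Finj (by
      show f (p (q (f (n, m2)))) = f (p j2)
      rw [hqspec _ hc2B, hj2])
    have hcol1 : col (f (n, m1)) = n := by
      show Nat.sqrt (q (f (n, m1))) = n
      rw [hq1]
      have := congrArg Prod.fst hj1
      simpa [hp] using this
    have hcol2 : col (f (n, m2)) = n := by
      show Nat.sqrt (q (f (n, m2))) = n
      rw [hq2]
      have := congrArg Prod.fst hj2
      simpa [hp] using this
    have hceq : f (n, m1) = f (n, m2) := hcolinj hc1 hc2 (by rw [hcol1, hcol2])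
    have hjeq : j1 = j2 := by
      rw [← hq1, ← hq2, hceq]
    have := hj1.symm.trans (by rw [hjeq, hj2])
    exact (Prod.ext_iff.mp this).2
  · -- some column has finite range
    push_neg at hI
    obtain ⟨n, hn⟩ := hI
    have hApos : {a : ℕ × ℕ | a.1 = n} ∉ EDminus := by
      rintro ⟨k, hk⟩
      have hkn := hk n
      have h1 : {m : ℕ | ((n, m) : ℕ × ℕ) ∈ {a : ℕ × ℕ | a.1 = n}} = Set.univ := by
        ext m; simp
      rw [h1, Set.Infinite.encard_eq Set.infinite_univ] at hkn
      simp at hkn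
    obtain ⟨B, hBA, hBI, -⟩ := hf _ hApos
    apply hBI
    show B.Finite
    apply hn.subset
    intro b hb
    obtain ⟨⟨a1, a2⟩, ha, rfl⟩ := hBA hb
    simp only [Set.mem_setOf_eq] at ha
    subst ha
    exact ⟨a2, rfl⟩
end

section
/- For every maximal ideal I on ω, Fin ≰_BW I, i.e., the relation Fin ≤_BW I fails. -/
open Set Filter Topology

theorem stmt15 (I : Set (Set ℕ)) (hI : IsIdeal I)
    (hmax : ∀ A : Set ℕ, A ∈ I ∨ Aᶜ ∈ I) : ¬ BWle FinIdeal I := by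
  rintro ⟨f, hf⟩
  obtain ⟨B, -, hBpos, hB⟩ := hf Set.univ hI.univ_not_mem
  have hBinf : B.Infinite := hBpos
  set e := hBinf.natEmbedding
  set B1 : Set ℕ := Set.range (fun n => (e (2 * n) : ℕ)) with hB1def
  have hB1sub : B1 ⊆ B := by
    rintro _ ⟨n, rfl⟩; exact (e (2 * n)).2
  have einj : Function.Injective (fun n => (e n : ℕ)) := fun a b h =>
    e.injective (Subtype.ext h)
  have hB1inf : B1.Infinite :=
    Set.infinite_range_of_injective (fun a b h => by
      have := einj h; omega)
  have h1 : B1 ∩ B ∉ FinIdeal := by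
    rw [Set.inter_eq_left.mpr hB1sub]
    exact hB1inf
  have h2 : B1ᶜ ∩ B ∉ FinIdeal := by
    intro hfin
    have hsub : Set.range (fun n => (e (2 * n + 1) : ℕ)) ⊆ B1ᶜ ∩ B := by
      rintro _ ⟨n, rfl⟩
      refine ⟨?_, (e (2 * n + 1)).2⟩
      rintro ⟨m, hm⟩
      have := einj hm; omega
    exact (Set.infinite_range_of_injective (fun a b h => by
      have := einj h; omega)).mono hsub hfin
  have k1 := hB B1 h1
  have k2 := hB B1ᶜ h2
  simp only [Set.univ_inter] at k1 k2
  rw [Set.preimage_compl] at k2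
  rcases hmax (f ⁻¹' B1) with h | h
  · exact k1 h
  · exact k2 h
end

section
/- Fin ≰_BW nwd, i.e., the relation Fin ≤_BW nwd fails, where nwd is the ideal of nowhere dense subsets of ℚ ∩ [0,1]. -/
open Set Filter Topology

/-- The ideal `nwd` of nowhere dense subsets of `ℚ ∩ [0,1]` (with the topology
inherited from `ℝ`, i.e. the subspace topology of `ℚ`). -/
def nwdIdeal : Set (Set (Set.Icc (0 : ℚ) 1)) :=
  {A : Set (Set.Icc (0 : ℚ) 1) | IsNowhereDense A}

/-! ### Auxiliary material -/

/-- The space `ℚ ∩ [0,1]`. -/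
abbrev QI : Type := ↥(Set.Icc (0 : ℚ) 1)

namespace Stmt16Aux

lemma nwd_union {X : Type*} [TopologicalSpace X] {s t : Set X}
    (hs : IsNowhereDense s) (ht : IsNowhereDense t) : IsNowhereDense (s ∪ t) := by
  have hUsub : interior (closure (s ∪ t)) ⊆ closure s := by
    intro x hx
    by_contra hxs
    have hopen : IsOpen (interior (closure (s ∪ t)) \ closure s) :=
      isOpen_interior.sdiff isClosed_closure
    have hsubt : interior (closure (s ∪ t)) \ closure s ⊆ closure t := by
      intro y hy
      have := interior_subset hy.1
      rw [closure_union] at this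
      rcases this with h | h
      · exact absurd h hy.2
      · exact h
    have : interior (closure (s ∪ t)) \ closure s ⊆ interior (closure t) :=
      interior_maximal hsubt hopen
    rw [ht] at this
    exact this ⟨hx, hxs⟩
  have : interior (closure (s ∪ t)) ⊆ interior (closure s) :=
    interior_maximal hUsub isOpen_interior
  rw [hs] at this
  exact eq_empty_iff_forall_notMem.2 fun x hx => this hx

lemma pick_lemma {D : Set QI} (hD : IsNowhereDense D) (q : QI) {ε : ℝ} (hε : 0 < ε) :
    ∃ x : QI, dist x q < ε ∧ x ∉ D := by
  by_contra h
  push_neg at h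
  have hball : Metric.ball q ε ⊆ closure D := by
    intro x hx
    exact subset_closure (h x (by simpa [Metric.mem_ball] using hx))
  have : Metric.ball q ε ⊆ interior (closure D) :=
    interior_maximal hball Metric.isOpen_ball
  rw [hD] at this
  exact this (Metric.mem_ball_self hε)

lemma fibers_nwd {f : QI → ℕ} (hfib : ∀ n, IsNowhereDense (f ⁻¹' ({n} : Set ℕ)))
    (F : Finset ℕ) : IsNowhereDense (f ⁻¹' (↑F : Set ℕ)) := by
  classical
  induction F using Finset.induction_on with
  | empty => simpa using isNowhereDense_empty
  | @insert a s ha ih =>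
      have : f ⁻¹' (↑(insert a s) : Set ℕ) = f ⁻¹' {a} ∪ f ⁻¹' ↑s := by
        rw [Finset.coe_insert, Set.insert_eq, Set.preimage_union]
      rw [this]
      exact nwd_union (hfib a) ih

/-- Infinitely many rationals strictly between `a` and `b`. -/
lemma rat_interval_infinite {a b : ℚ} (hab : a < b) :
    {x : ℚ | a < x ∧ x < b}.Infinite := by
  by_contra h
  rw [Set.not_infinite] at h
  obtain ⟨c, hac, hcb⟩ := exists_between hab
  have hne : {x : ℚ | a < x ∧ x < b}.Nonempty := ⟨c, hac, hcb⟩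
  obtain ⟨m, hm, hmin⟩ := Set.exists_min_image _ id h hne
  obtain ⟨d, had, hdm⟩ := exists_between hm.1
  have hd : d ∈ {x : ℚ | a < x ∧ x < b} := ⟨had, hdm.trans hm.2⟩
  exact absurd (hmin d hd) (by simpa using hdm)

/-- Infinitely many points of `QI` strictly between real bounds `a < b`
inside `[0,1]`. -/
lemma qi_interval_infinite {a b : ℚ} (hab : a < b) (ha : 0 ≤ a) (hb : b ≤ 1) :
    {x : QI | a < (x : ℚ) ∧ (x : ℚ) < b}.Infinite := by
  have hQ := rat_interval_infinite hab
  have hsub : {x : ℚ | a < x ∧ x < b} ⊆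
      Subtype.val '' {x : QI | a < (x : ℚ) ∧ (x : ℚ) < b} := by
    intro x hx
    have hx01 : x ∈ Set.Icc (0 : ℚ) 1 := ⟨ha.trans hx.1.le, hx.2.le.trans hb⟩
    exact ⟨⟨x, hx01⟩, ⟨hx.1, hx.2⟩, rfl⟩
  exact Set.Infinite.of_image _ (hQ.mono hsub)

/-- `dist` on `QI` in terms of real casts. -/
lemma qi_dist (x y : QI) : dist x y = |((x : ℚ) : ℝ) - ((y : ℚ) : ℝ)| := by
  rw [Subtype.dist_eq, Rat.dist_eq]

/-- The range of a sequence in `QI` converging (as reals) to some `p : ℝ` is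
nowhere dense. -/
lemma conv_nwd (t : ℕ → QI) (p : ℝ)
    (ht : Tendsto (fun n => (((t n : ℚ) : ℝ))) atTop (𝓝 p)) :
    IsNowhereDense (Set.range t) := by
  rw [IsNowhereDense, eq_empty_iff_forall_notMem]
  intro q hq
  rw [mem_interior_iff_mem_nhds, Metric.mem_nhds_iff] at hq
  obtain ⟨ε, hε, hball⟩ := hq
  set qR : ℝ := ((q : ℚ) : ℝ) with hqR
  have hq0 : (0 : ℝ) ≤ qR := by rw [hqR]; exact_mod_cast q.2.1
  have hq1 : qR ≤ 1 := by rw [hqR]; exact_mod_cast q.2.2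
  set lo : ℝ := max (qR - ε) 0 with hlo
  set hi : ℝ := min (qR + ε) 1 with hhi
  have hlo0 : 0 ≤ lo := le_max_right _ _
  have hhi1 : hi ≤ 1 := min_le_right _ _
  have hlohi : lo < hi := by
    rcases eq_or_lt_of_le hq0 with h0 | h0
    · have : lo = 0 := by
        rw [hlo, max_eq_right]; linarith
      rw [this, hhi]
      exact lt_min (by linarith) (by linarith)
    · have h1 : lo < qR := max_lt (by linarith) h0
      have h2 : qR < hi ∨ qR = 1 := by
        rcases lt_or_eq_of_le hq1 with h | h
        · exact Or.inl (lt_min (by linarith) h)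
        · exact Or.inr h
      rcases h2 with h | h
      · linarith
      · have : hi = 1 := by rw [hhi, min_eq_right]; linarith
        rw [this]; linarith [h1, h ▸ h1]
  -- pick a rational subinterval (a,b) of (lo,hi) avoiding p
  have key : ∃ a b : ℚ, (a : ℝ) < b ∧ lo ≤ (a : ℝ) ∧ ((b : ℝ)) ≤ hi ∧
      (p < a ∨ (b : ℝ) < p) := by
    set m1 : ℝ := lo + (hi - lo) / 3 with hm1
    set m2 : ℝ := lo + 2 * (hi - lo) / 3 with hm2
    have h1 : lo < m1 := by rw [hm1]; linarith
    have h2 : m1 < m2 := by rw [hm1, hm2]; linarith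
    have h3 : m2 < hi := by rw [hm2]; linarith
    rcases lt_or_ge p m2 with hp | hp
    · obtain ⟨a, ha1, ha2⟩ := exists_rat_btwn h3
      obtain ⟨b, hb1, hb2⟩ := exists_rat_btwn ha2
      exact ⟨a, b, by exact_mod_cast hb1, by linarith, hb2.le,
        Or.inl (lt_of_lt_of_le hp (by linarith))⟩
    · obtain ⟨a, ha1, ha2⟩ := exists_rat_btwn h1
      obtain ⟨b, hb1, hb2⟩ := exists_rat_btwn ha2
      refine ⟨a, b, by exact_mod_cast hb1, ha1.le, by linarith, Or.inr ?_⟩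
      calc (b : ℝ) < m1 := hb2
        _ < m2 := h2
        _ ≤ p := hp
  obtain ⟨a, b, hab, hloa, hbhi, hpab⟩ := key
  -- eventually t n is outside (a, b)
  have hev : ∀ᶠ n in atTop, ¬((a : ℝ) < ((t n : ℚ) : ℝ) ∧ ((t n : ℚ) : ℝ) < (b : ℝ)) := by
    rcases hpab with hp | hp
    · filter_upwards [ht.eventually_lt_const hp] with n hn
      exact fun hcon => absurd hcon.1 (by linarith)
    · filter_upwards [ht.eventually_const_lt hp] with n hn
      exact fun hcon => absurd hcon.2 (by linarith)
  obtain ⟨N, hN⟩ := eventually_atTop.1 hev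
  -- the finite set of early terms
  set F : Set QI := t '' {n | n < N} with hF
  have hFfin : F.Finite := (Set.finite_lt_nat N).image t
  have hFclosed : IsClosed F := hFfin.isClosed
  -- the interval (a,b) in QI
  set W : Set QI := {x : QI | a < (x : ℚ) ∧ (x : ℚ) < b} with hW
  have habQ : a < b := by exact_mod_cast hab
  have hWinf : W.Infinite :=
    qi_interval_infinite habQ (by exact_mod_cast hlo0.trans hloa)
      (by exact_mod_cast hbhi.trans hhi1)
  -- W ⊆ ball q ε
  have hWball : W ⊆ Metric.ball q ε := by
    intro x hx
    have hx1 : (a : ℝ) < ((x : ℚ) : ℝ) := by exact_mod_cast hx.1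
    have hx2 : ((x : ℚ) : ℝ) < (b : ℝ) := by exact_mod_cast hx.2
    have hxlo : lo < ((x : ℚ) : ℝ) := lt_of_le_of_lt hloa hx1
    have hxhi : ((x : ℚ) : ℝ) < hi := lt_of_lt_of_le hx2 hbhi
    have hge : qR - ε < ((x : ℚ) : ℝ) := lt_of_le_of_lt (le_max_left _ _) hxlo
    have hle : ((x : ℚ) : ℝ) < qR + ε := lt_of_lt_of_le hxhi (min_le_left _ _)
    rw [Metric.mem_ball, qi_dist]
    rw [abs_lt]
    constructor <;> [linarith; linarith]
  -- every element of W lies in F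
  have hWF : W ⊆ F := by
    intro w hw
    have hwcl : w ∈ closure (Set.range t) := hball (hWball hw)
    have hw1 : (a : ℝ) < ((w : ℚ) : ℝ) := by exact_mod_cast hw.1
    have hw2 : ((w : ℚ) : ℝ) < (b : ℝ) := by exact_mod_cast hw.2
    set δ0 : ℝ := min (((w : ℚ) : ℝ) - a) ((b : ℝ) - ((w : ℚ) : ℝ)) with hδ0
    have hδ0pos : 0 < δ0 := lt_min (by linarith) (by linarith)
    -- w ∈ closure F
    have hwclF : w ∈ closure F := by
      rw [Metric.mem_closure_iff]
      intro δ hδ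
      obtain ⟨y, hy, hdy⟩ := Metric.mem_closure_iff.1 hwcl (min δ δ0)
        (lt_min hδ hδ0pos)
      obtain ⟨n, rfl⟩ := hy
      have hdy0 : dist w (t n) < δ0 := lt_of_lt_of_le hdy (min_le_right _ _)
      rw [qi_dist, abs_lt] at hdy0
      have htn1 : (a : ℝ) < ((t n : ℚ) : ℝ) := by
        have := hdy0.2
        have h1 : δ0 ≤ ((w : ℚ) : ℝ) - a := min_le_left _ _
        linarith
      have htn2 : ((t n : ℚ) : ℝ) < (b : ℝ) := by
        have := hdy0.1
        have h1 : δ0 ≤ (b : ℝ) - ((w : ℚ) : ℝ) := min_le_right _ _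
        linarith
      have hnN : n < N := by
        by_contra hcon
        exact hN n (le_of_not_gt hcon) ⟨htn1, htn2⟩
      exact ⟨t n, ⟨n, hnN, rfl⟩, lt_of_lt_of_le hdy (min_le_left _ _)⟩
    rwa [hFclosed.closure_eq] at hwclF
  exact hWinf (hFfin.subset hWF)

/-- Recursive construction of the list of previously chosen points. -/
noncomputable def buildL (pick : ℕ → List QI → QI) : ℕ → List QI
  | 0 => []
  | k + 1 => buildL pick k ++ [pick k (buildL pick k)]

lemma mem_buildL (pick : ℕ → List QI → QI) {j k : ℕ} (h : j < k) :
    pick j (buildL pick j) ∈ buildL pick k := by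
  induction k with
  | zero => omega
  | succ k ih =>
      rcases Nat.lt_succ_iff_lt_or_eq.1 h with h | h
      · exact List.mem_append_left _ (ih h)
      · subst h
        exact List.mem_append_right _ (List.mem_singleton.2 rfl)

end Stmt16Aux

open Stmt16Aux in
theorem stmt16 : ¬ BWle FinIdeal nwdIdeal := by
  classical
  rintro ⟨f, hf⟩
  by_cases hfib : ∀ n, IsNowhereDense (f ⁻¹' ({n} : Set ℕ))
  · -- all fibers nowhere dense
    -- enumeration of QI
    have : Nonempty QI := ⟨⟨0, by constructor <;> norm_num⟩⟩
    obtain ⟨en, hen⟩ := exists_surjective_nat QI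
    -- choice of new points
    have key : ∀ (q : QI) (m : ℕ) (F : Finset ℕ),
        ∃ x : QI, dist x q < 1 / (m + 1 : ℝ) ∧ f x ∉ F := by
      intro q m F
      have hpos : (0 : ℝ) < 1 / (m + 1 : ℝ) := by positivity
      obtain ⟨x, hx1, hx2⟩ := pick_lemma (fibers_nwd hfib F) q hpos
      exact ⟨x, hx1, by simpa using hx2⟩
    choose pick0 hpick1 hpick2 using key
    set pickf : ℕ → List QI → QI := fun k prev =>
      pick0 (en (Nat.unpair k).1) (Nat.unpair k).2 ((prev.map f).toFinset) with hpickf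
    set g : ℕ → QI := fun k => pickf k (buildL pickf k) with hg
    -- basic properties of g
    have hgdist : ∀ k, dist (g k) (en (Nat.unpair k).1) < 1 / ((Nat.unpair k).2 + 1 : ℝ) :=
      fun k => hpick1 _ _ _
    have hgnew : ∀ k, f (g k) ∉ ((buildL pickf k).map f).toFinset :=
      fun k => hpick2 _ _ _
    have hfg_lt : ∀ j k, j < k → f (g j) ≠ f (g k) := by
      intro j k hjk heq
      apply hgnew k
      rw [List.mem_toFinset, List.mem_map]
      exact ⟨g j, mem_buildL pickf hjk, heq⟩
    have hfg_inj : Function.Injective (fun k => f (g k)) := by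
      intro j k h
      by_contra hne
      rcases Nat.lt_or_ge j k with hlt | hge
      · exact hfg_lt j k hlt h
      · exact hfg_lt k j (lt_of_le_of_ne hge (Ne.symm hne)) h.symm
    -- A := range g is dense
    set A : Set QI := Set.range g with hA
    have hAdense : Dense A := by
      rw [Metric.dense_iff]
      intro x r hr
      obtain ⟨i, rfl⟩ := hen x
      obtain ⟨m, hm⟩ := exists_nat_one_div_lt hr
      refine ⟨g (Nat.pair i m), ?_, ⟨Nat.pair i m, rfl⟩⟩
      rw [Metric.mem_ball]
      have := hgdist (Nat.pair i m)
      rw [Nat.unpair_pair] at this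
      calc dist (g (Nat.pair i m)) (en i) < 1 / (m + 1 : ℝ) := this
        _ < r := by exact_mod_cast hm
    have hApos : A ∉ nwdIdeal := by
      intro hcon
      have h1 : closure A = univ := hAdense.closure_eq
      have h2 : interior (closure A) = ∅ := hcon
      rw [h1, interior_univ] at h2
      exact (Set.univ_nonempty).ne_empty h2
    obtain ⟨B, hBsub, hBpos, hBmain⟩ := hf A hApos
    have hBinf : B.Infinite := hBpos
    -- K: indices whose f∘g value is in B
    set K : Set ℕ := (fun k => f (g k)) ⁻¹' B with hK
    have hKinf : K.Infinite := by
      intro hKfin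
      apply hBinf
      have hBsub' : B ⊆ (fun k => f (g k)) '' K := by
        intro b hb
        obtain ⟨x, hx, rfl⟩ := hBsub hb
        obtain ⟨k, rfl⟩ := hx
        exact ⟨k, hb, rfl⟩
      exact (hKfin.image _).subset hBsub'
    set emb := hKinf.natEmbedding with hemb
    set u : ℕ → ℕ := fun n => (emb n : ℕ) with hu
    have hu_inj : Function.Injective u :=
      Subtype.val_injective.comp emb.injective
    have hu_mem : ∀ n, u n ∈ K := fun n => (emb n).2
    -- Bolzano–Weierstrass in ℝ
    set x : ℕ → ℝ := fun n => ((g (u n) : ℚ) : ℝ) with hx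
    have hxmem : ∀ n, x n ∈ Set.Icc (0 : ℝ) 1 := by
      intro n
      constructor
      · show (0:ℝ) ≤ ((g (u n) : ℚ) : ℝ)
        exact_mod_cast (g (u n)).2.1
      · show ((g (u n) : ℚ) : ℝ) ≤ 1
        exact_mod_cast (g (u n)).2.2
    obtain ⟨p, -, φ, hφ, hconv⟩ :=
      tendsto_subseq_of_bounded (Metric.isBounded_Icc (0 : ℝ) 1) hxmem
    set t : ℕ → QI := fun n => g (u (φ n)) with htdef
    have htconv : Tendsto (fun n => ((t n : ℚ) : ℝ)) atTop (𝓝 p) := hconv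
    set T : Set QI := Set.range t with hT
    have hTnwd : IsNowhereDense T := conv_nwd t p htconv
    set C : Set ℕ := Set.range (fun n => f (t n)) with hC
    have hCB : C ⊆ B := by
      rintro c ⟨n, rfl⟩
      exact hu_mem (φ n)
    have hCinf : C.Infinite := by
      apply Set.infinite_range_of_injective
      exact hfg_inj.comp (hu_inj.comp hφ.injective)
    have hCBpos : C ∩ B ∉ FinIdeal := by
      rw [Set.inter_eq_left.2 hCB]
      exact hCinf
    have hATC : A ∩ f ⁻¹' C = T := by
      apply Set.Subset.antisymm
      · rintro y ⟨⟨k, rfl⟩, hyC⟩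
        obtain ⟨n, hn⟩ := hyC
        have : u (φ n) = k := hfg_inj hn
        exact ⟨n, by show g (u (φ n)) = g k; rw [this]⟩
      · rintro y ⟨n, rfl⟩
        exact ⟨⟨u (φ n), rfl⟩, ⟨n, rfl⟩⟩
    have := hBmain C hCBpos
    rw [hATC] at this
    exact this hTnwd
  · -- some fiber is somewhere dense
    push_neg at hfib
    obtain ⟨n, hn⟩ := hfib
    have hApos : f ⁻¹' ({n} : Set ℕ) ∉ nwdIdeal := hn
    obtain ⟨B, hBsub, hBpos, -⟩ := hf _ hApos
    apply hBpos
    have : B ⊆ {n} := hBsub.trans (Set.image_preimage_subset f {n})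
    exact (Set.finite_singleton n).subset this
end

section
/- W ≰_BW I_{1/n} and I_{1/n} ≰_BW W, i.e., the van der Waerden ideal W and the summable ideal I_{1/n} are ≤_BW-incomparable. -/
open Set Filter Topology

set_option maxHeartbeats 1000000

section AuxSection
open MeasureTheory

namespace AuxBW

noncomputable section

open ENNReal NNReal

def aa (n : ℕ) : ℝ≥0∞ := ((n : ℝ≥0∞) + 1)⁻¹

lemma aa_ne_top (n : ℕ) : aa n ≠ ⊤ := by
  simp [aa]

lemma aa_antitone {m n : ℕ} (h : m ≤ n) : aa n ≤ aa m := by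
  apply ENNReal.inv_le_inv.mpr
  exact add_le_add_left (by exact_mod_cast h) 1

def mu : Measure ℕ := Measure.sum fun n => (aa n) • Measure.dirac n

lemma meas (S : Set ℕ) : MeasurableSet S := .of_discrete

lemma mu_apply (S : Set ℕ) : mu S = ∑' n, S.indicator aa n := by
  rw [mu, Measure.sum_apply _ (meas S)]
  congr 1; funext n
  rw [Measure.smul_apply, Measure.dirac_apply, smul_eq_mul]
  by_cases h : n ∈ S <;> simp [Set.indicator, h]

lemma mu_singleton (v : ℕ) : mu {v} = aa v := by
  rw [mu_apply, tsum_eq_single v ?_]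
  · simp
  · intro b hb; simp [Set.indicator, hb]

lemma mem_summableIdeal_iff (S : Set ℕ) : S ∈ summableIdeal ↔ mu S ≠ ⊤ := by
  have e1 : S.indicator (fun n => (1 : ℝ) / (n + 1)) =
      fun n => ((S.indicator (fun n => ((n : ℝ≥0) + 1)⁻¹) n : ℝ≥0) : ℝ) := by
    funext n
    by_cases h : n ∈ S
    · simp only [Set.indicator_of_mem h, one_div]
      push_cast
      rfl
    · simp [Set.indicator_of_notMem h]
  have e2 : (fun n => ((S.indicator (fun n => ((n : ℝ≥0) + 1)⁻¹) n : ℝ≥0) : ℝ≥0∞)) =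
      fun n => S.indicator aa n := by
    funext n
    by_cases h : n ∈ S
    · simp only [Set.indicator_of_mem h, aa]
      rw [ENNReal.coe_inv (by positivity)]
      push_cast
      rfl
    · simp [Set.indicator_of_notMem h]
  have e3 : mu S = ∑' n, ((S.indicator (fun n => ((n : ℝ≥0) + 1)⁻¹) n : ℝ≥0) : ℝ≥0∞) := by
    rw [mu_apply, e2]
  constructor
  · intro hS
    rw [e3]
    apply ENNReal.tsum_coe_ne_top_iff_summable.mpr
    rw [← NNReal.summable_coe]
    rw [summableIdeal, mem_setOf_eq, e1] at hS
    exact hS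
  · intro h
    rw [summableIdeal, mem_setOf_eq, e1, NNReal.summable_coe]
    apply ENNReal.tsum_coe_ne_top_iff_summable.mp
    rw [← e3]
    exact h

lemma mu_univ_top : mu (univ : Set ℕ) = ⊤ := by
  by_contra h
  have h2 : Summable (fun n : ℕ => (1 : ℝ) / (n + 1)) := by
    have := (mem_summableIdeal_iff univ).mpr h
    rw [summableIdeal, mem_setOf_eq, Set.indicator_univ] at this
    exact this
  have h4 : Summable (fun n : ℕ => (1 : ℝ) / (((n + 1 : ℕ) : ℝ))) := by
    exact_mod_cast h2
  exact Real.not_summable_one_div_natCast ((_root_.summable_nat_add_iff 1).mp h4)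

lemma mu_finset_lt_top (F : Finset ℕ) : mu (↑F : Set ℕ) < ⊤ := by
  have e : (↑F : Set ℕ) = ⋃ v ∈ F, {v} := by ext x; simp
  rw [e]
  refine lt_of_le_of_lt (measure_biUnion_finset_le F _) ?_
  refine ENNReal.sum_lt_top.mpr fun v _ => ?_
  rw [mu_singleton]; exact (aa_ne_top v).lt_top

lemma not_vdW_iff (S : Set ℕ) : S ∉ vdWIdeal ↔ ∀ n, HasAPOfLength S n := by
  rw [vdWIdeal, mem_setOf_eq]
  push_neg
  rfl

end
end AuxBW

namespace AuxBW
noncomputable section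
open ENNReal NNReal

lemma dirB : ¬ BWle summableIdeal vdWIdeal := by
  rintro ⟨f, hf⟩
  have huniv : (univ : Set ℕ) ∉ vdWIdeal := by
    rw [not_vdW_iff]
    intro n
    exact ⟨0, 1, le_refl 1, fun i _ => trivial⟩
  obtain ⟨B₀, hB₀sub, hB₀pos, hcl⟩ := hf univ huniv
  have hB₀top : mu B₀ = ⊤ := by
    by_contra h
    exact hB₀pos ((mem_summableIdeal_iff _).mpr h)
  have key : ∀ V n, HasAPOfLength (f ⁻¹' (B₀ ∩ {v | V ≤ v})) n := by
    intro V
    rw [← not_vdW_iff]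
    have hmuC : mu (B₀ ∩ {v | V ≤ v}) = ⊤ := by
      by_contra h
      have hsub : B₀ ⊆ (B₀ ∩ {v | V ≤ v}) ∪ (↑(Finset.range V) : Set ℕ) := by
        intro v hv
        by_cases hV : V ≤ v
        · exact Or.inl ⟨hv, hV⟩
        · exact Or.inr (by simp; omega)
      have hlt : mu B₀ < ⊤ := by
        calc mu B₀ ≤ mu ((B₀ ∩ {v | V ≤ v}) ∪ ↑(Finset.range V)) := measure_mono hsub
          _ ≤ mu (B₀ ∩ {v | V ≤ v}) + mu ↑(Finset.range V) := measure_union_le _ _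
          _ < ⊤ := ENNReal.add_lt_top.mpr ⟨lt_top_iff_ne_top.mpr h, mu_finset_lt_top _⟩
      exact absurd hB₀top hlt.ne
    have hpos : (B₀ ∩ {v | V ≤ v}) ∩ B₀ ∉ summableIdeal := by
      have e : (B₀ ∩ {v | V ≤ v}) ∩ B₀ = B₀ ∩ {v | V ≤ v} := by
        ext v; constructor
        · rintro ⟨h1, _⟩; exact h1
        · rintro ⟨h1, h2⟩; exact ⟨⟨h1, h2⟩, h1⟩
      rw [e]
      intro hmem
      exact (mem_summableIdeal_iff _).mp hmem hmuC
    have := hcl _ hpos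
    simpa using this
  have hap : ∀ k : ℕ, HasAPOfLength (f ⁻¹' (B₀ ∩ {v | (k+1) * 2^k ≤ v})) k :=
    fun k => key _ k
  choose a d hd hmem using hap
  set A : Set ℕ := ⋃ k, (fun i => a k + i * d k) '' (Iio k) with hA
  have hApos : A ∉ vdWIdeal := by
    rw [not_vdW_iff]
    intro n
    exact ⟨a n, d n, hd n, fun i hi => mem_iUnion.mpr ⟨n, ⟨i, hi, rfl⟩⟩⟩
  obtain ⟨B, hBsub, hBpos, -⟩ := hf A hApos
  have hBtop : mu B = ⊤ := by
    by_contra h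
    exact hBpos ((mem_summableIdeal_iff _).mpr h)
  have himg : f '' A ⊆ ⋃ k, ⋃ i ∈ Finset.range k, ({f (a k + i * d k)} : Set ℕ) := by
    rintro v ⟨n, hn, rfl⟩
    rw [hA, mem_iUnion] at hn
    obtain ⟨k, i, hik, rfl⟩ := hn
    simp only [Set.mem_iUnion, Set.mem_singleton_iff, Finset.mem_range]
    exact ⟨k, i, hik, rfl⟩
  have hone : ∀ k : ℕ, mu (⋃ i ∈ Finset.range k, ({f (a k + i * d k)} : Set ℕ)) ≤ 2⁻¹ ^ k := by
    intro k
    refine le_trans (measure_biUnion_finset_le _ _) ?_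
    have hk1 : ((k : ℝ≥0∞) + 1) ≠ 0 := by
      intro hcon
      simp at hcon
    have hk2 : ((k : ℝ≥0∞) + 1) ≠ ⊤ := by
      simp [ENNReal.add_eq_top]
    have hb : ∀ i ∈ Finset.range k, mu ({f (a k + i * d k)} : Set ℕ) ≤ aa ((k+1) * 2^k) := by
      intro i hi
      rw [mu_singleton]
      exact aa_antitone (hmem k i (Finset.mem_range.mp hi)).2
    have h1 : aa ((k+1) * 2^k) ≤ (((k:ℝ≥0∞)+1) * 2^k)⁻¹ := by
      rw [aa]
      apply ENNReal.inv_le_inv.mpr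
      push_cast
      exact le_add_right (le_refl _)
    have h2 : (((k:ℝ≥0∞)+1) * 2^k)⁻¹ = ((k:ℝ≥0∞)+1)⁻¹ * 2⁻¹ ^ k := by
      rw [ENNReal.mul_inv (Or.inl hk1) (Or.inl hk2), ENNReal.inv_pow]
    have h4 : (k:ℝ≥0∞) * ((k:ℝ≥0∞)+1)⁻¹ ≤ 1 := by
      calc (k:ℝ≥0∞) * ((k:ℝ≥0∞)+1)⁻¹ ≤ ((k:ℝ≥0∞)+1) * ((k:ℝ≥0∞)+1)⁻¹ :=
            mul_le_mul_left (le_add_right (le_refl _)) _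
        _ = 1 := ENNReal.mul_inv_cancel hk1 hk2
    calc ∑ i ∈ Finset.range k, mu ({f (a k + i * d k)} : Set ℕ)
        ≤ ∑ _i ∈ Finset.range k, aa ((k+1) * 2^k) := Finset.sum_le_sum hb
      _ = (k : ℝ≥0∞) * aa ((k+1) * 2^k) := by
          rw [Finset.sum_const, Finset.card_range, nsmul_eq_mul]
      _ ≤ (k : ℝ≥0∞) * (((k:ℝ≥0∞)+1)⁻¹ * 2⁻¹ ^ k) := by
          rw [← h2]; exact mul_le_mul_right h1 _
      _ = ((k:ℝ≥0∞) * ((k:ℝ≥0∞)+1)⁻¹) * 2⁻¹ ^ k := by ring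
      _ ≤ 1 * 2⁻¹ ^ k := mul_le_mul_left h4 _
      _ = 2⁻¹ ^ k := one_mul _
  have hend : mu B ≤ 2 := by
    calc mu B ≤ mu (f '' A) := measure_mono hBsub
      _ ≤ mu (⋃ k, ⋃ i ∈ Finset.range k, ({f (a k + i * d k)} : Set ℕ)) := measure_mono himg
      _ ≤ ∑' k, mu (⋃ i ∈ Finset.range k, ({f (a k + i * d k)} : Set ℕ)) := measure_iUnion_le _
      _ ≤ ∑' k : ℕ, 2⁻¹ ^ k := ENNReal.tsum_le_tsum hone
      _ = 2 := by rw [ENNReal.tsum_geometric, ENNReal.one_sub_inv_two, inv_inv]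
  rw [hBtop] at hend
  exact ENNReal.ofNat_ne_top (top_le_iff.mp hend)

end
end AuxBW

namespace AuxBW
noncomputable section
open ENNReal NNReal

lemma dirA : ¬ BWle vdWIdeal summableIdeal := by
  rintro ⟨f, hf⟩
  by_cases hfib : ∃ v, mu (f ⁻¹' {v}) = ⊤
  · obtain ⟨v₀, hv₀⟩ := hfib
    have hApos : f ⁻¹' {v₀} ∉ summableIdeal := fun hmem =>
      (mem_summableIdeal_iff _).mp hmem hv₀
    obtain ⟨B, hBsub, hBpos, -⟩ := hf _ hApos
    obtain ⟨aq, dq, hdq, hm⟩ := (not_vdW_iff B).mp hBpos 2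
    have hs : B ⊆ {v₀} := hBsub.trans (Set.image_preimage_subset f {v₀})
    have e0 : aq + 0 * dq = v₀ := hs (hm 0 (by norm_num))
    have e1 : aq + 1 * dq = v₀ := hs (hm 1 (by norm_num))
    omega
  · push_neg at hfib
    have hdisj : Pairwise (Function.onFun Disjoint fun v : ℕ => f ⁻¹' {v}) := by
      intro i j hij
      simp only [Function.onFun]
      rw [Set.disjoint_left]
      rintro n hni hnj
      exact hij (hni.symm.trans hnj)
    have hwsum : ∑' v, mu (f ⁻¹' {v}) = ⊤ := by
      have hU : ⋃ v, f ⁻¹' ({v} : Set ℕ) = univ := by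
        ext n; simp
      calc ∑' v, mu (f ⁻¹' {v}) = mu (⋃ v, f ⁻¹' {v}) :=
            (measure_iUnion hdisj fun v => meas _).symm
        _ = ⊤ := by rw [hU, mu_univ_top]
    have htail : ∀ V : ℕ, ∃ E : Finset ℕ,
        (∀ v ∈ E, V ≤ v) ∧ 1 ≤ ∑ v ∈ E, mu (f ⁻¹' {v}) := by
      intro V
      have hhdt : (∑ v ∈ Finset.range V, mu (f ⁻¹' {v})) ≠ ⊤ :=
        (ENNReal.sum_lt_top.mpr fun v _ => (hfib v).lt_top).ne
      have h1lt : 1 + (∑ v ∈ Finset.range V, mu (f ⁻¹' {v})) < ∑' v, mu (f ⁻¹' {v}) := by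
        rw [hwsum]
        exact (ENNReal.add_lt_top.mpr ⟨ENNReal.one_lt_top, hhdt.lt_top⟩).trans_le le_top
      rw [ENNReal.tsum_eq_iSup_sum] at h1lt
      obtain ⟨F, hF⟩ := lt_iSup_iff.mp h1lt
      refine ⟨F.filter (fun v => V ≤ v), fun v hv => (Finset.mem_filter.mp hv).2, ?_⟩
      have hsplitF : ∑ v ∈ F, mu (f ⁻¹' {v})
          = ∑ v ∈ F.filter (fun v => V ≤ v), mu (f ⁻¹' {v})
            + ∑ v ∈ F.filter (fun v => ¬ V ≤ v), mu (f ⁻¹' {v}) :=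
        (Finset.sum_filter_add_sum_filter_not F _ _).symm
      have hsmallpart : ∑ v ∈ F.filter (fun v => ¬ V ≤ v), mu (f ⁻¹' {v})
          ≤ ∑ v ∈ Finset.range V, mu (f ⁻¹' {v}) := by
        apply Finset.sum_le_sum_of_subset
        intro v hv
        simp only [Finset.mem_filter, not_le] at hv
        exact Finset.mem_range.mpr hv.2
      have hlt3 : 1 + (∑ v ∈ Finset.range V, mu (f ⁻¹' {v}))
          < (∑ v ∈ F.filter (fun v => V ≤ v), mu (f ⁻¹' {v}))
            + (∑ v ∈ Finset.range V, mu (f ⁻¹' {v})) := by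
        calc 1 + (∑ v ∈ Finset.range V, mu (f ⁻¹' {v})) < ∑ v ∈ F, mu (f ⁻¹' {v}) := hF
          _ = _ := hsplitF
          _ ≤ _ := add_le_add_right hsmallpart _
      exact ((ENNReal.add_lt_add_iff_right hhdt).mp hlt3).le
    by_cases hto : ∀ j : ℕ, ∃ V, ∀ v, V ≤ v → mu (f ⁻¹' {v}) ≤ 2⁻¹ ^ j
    · -- all fiber measures tend to 0 : block construction
      choose thr hthr using hto
      choose Ech hEge hEsum using htail
      let V : ℕ → ℕ := fun k =>
        Nat.rec (thr 0) (fun k Vk => max (Vk + 1) (max (thr (k+1)) (((Ech Vk).sup id) + 1))) k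
      have hV0 : V 0 = thr 0 := rfl
      have hVs : ∀ k, V (k+1) = max (V k + 1) (max (thr (k+1)) (((Ech (V k)).sup id) + 1)) :=
        fun k => rfl
      have hVthr : ∀ k, thr k ≤ V k := by
        intro k
        cases k with
        | zero => exact le_of_eq hV0.symm
        | succ k => rw [hVs k]; omega
      have hVlt : ∀ k, V k < V (k+1) := by
        intro k; rw [hVs k]; omega
      have hVmono : StrictMono V := strictMono_nat_of_lt_succ hVlt
      have hwV : ∀ k v, V k ≤ v → mu (f ⁻¹' {v}) ≤ 2⁻¹ ^ k :=
        fun k v hv => hthr k v (le_trans (hVthr k) hv)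
      have hElt : ∀ k v, v ∈ Ech (V k) → v < V (k+1) := by
        intro k v hv
        have h1 : v ≤ (Ech (V k)).sup id := Finset.le_sup (f := id) hv
        rw [hVs k]
        omega
      set S : Set ℕ := ⋃ k, (↑(Ech (V k)) : Set ℕ) with hS
      have hAtop : mu (f ⁻¹' S) = ⊤ := by
        by_contra h
        obtain ⟨K, hK⟩ := ENNReal.exists_nat_gt h
        have hdisjE : (↑(Finset.range K) : Set ℕ).PairwiseDisjoint fun k => Ech (V k) := by
          intro k _ l _ hkl
          apply Finset.disjoint_left.mpr
          intro v hvk hvl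
          rcases lt_or_gt_of_ne hkl with hlt | hlt
          · have h1 : v < V (k+1) := hElt _ _ hvk
            have h2 : V l ≤ v := hEge _ _ hvl
            have h3 : V (k+1) ≤ V l := hVmono.monotone hlt
            omega
          · have h1 : v < V (l+1) := hElt _ _ hvl
            have h2 : V k ≤ v := hEge _ _ hvk
            have h3 : V (l+1) ≤ V k := hVmono.monotone hlt
            omega
        set U : Finset ℕ := (Finset.range K).biUnion (fun k => Ech (V k)) with hU
        have hsub2 : (⋃ v ∈ U, f ⁻¹' ({v} : Set ℕ)) ⊆ f ⁻¹' S := by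
          intro n hn
          simp only [Set.mem_iUnion, Set.mem_preimage, Set.mem_singleton_iff] at hn
          obtain ⟨v, hvU, hfv⟩ := hn
          rw [hU, Finset.mem_biUnion] at hvU
          obtain ⟨k, -, hvE⟩ := hvU
          refine Set.mem_preimage.mpr (Set.mem_iUnion.mpr ⟨k, ?_⟩)
          rw [hfv]
          exact Finset.mem_coe.mpr hvE
        have hUdisj : (↑U : Set ℕ).PairwiseDisjoint fun v => f ⁻¹' ({v} : Set ℕ) := by
          intro x _ y _ hxy
          rw [Function.onFun, Set.disjoint_left]
          rintro n h1 h2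
          simp only [Set.mem_preimage, Set.mem_singleton_iff] at h1 h2
          exact hxy (h1.symm.trans h2)
        have hge : (K : ℝ≥0∞) ≤ mu (f ⁻¹' S) := by
          calc (K : ℝ≥0∞) = ∑ _k ∈ Finset.range K, (1:ℝ≥0∞) := by simp
            _ ≤ ∑ k ∈ Finset.range K, ∑ v ∈ Ech (V k), mu (f ⁻¹' {v}) :=
                Finset.sum_le_sum fun k _ => hEsum (V k)
            _ = ∑ v ∈ U, mu (f ⁻¹' {v}) := (Finset.sum_biUnion hdisjE).symm
            _ = mu (⋃ v ∈ U, f ⁻¹' ({v} : Set ℕ)) :=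
                (measure_biUnion_finset hUdisj fun v _ => meas _).symm
            _ ≤ mu (f ⁻¹' S) := measure_mono hsub2
        exact absurd hK (not_lt.mpr hge)
      have hApos : f ⁻¹' S ∉ summableIdeal := fun hmem =>
        (mem_summableIdeal_iff _).mp hmem hAtop
      obtain ⟨B, hBsub, hBpos, hcl⟩ := hf _ hApos
      have hB := (not_vdW_iff B).mp hBpos
      have hap := fun j : ℕ => hB (V (2*j) + j)
      choose a d hd hmem using hap
      set C : Set ℕ := ⋃ j, (fun i => a j + (V (2*j) + i) * d j) '' (Iio j) with hC
      have hCB : ∀ j i, i < j → a j + (V (2*j) + i) * d j ∈ B := by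
        intro j i hij
        exact hmem j (V (2*j) + i) (by omega)
      have hCpos : C ∩ B ∉ vdWIdeal := by
        rw [not_vdW_iff]
        intro n
        refine ⟨a n + V (2*n) * d n, d n, hd n, fun i hi => ?_⟩
        constructor
        · rw [hC]
          refine Set.mem_iUnion.mpr ⟨n, ⟨i, hi, ?_⟩⟩
          ring
        · have e : a n + V (2*n) * d n + i * d n = a n + (V (2*n) + i) * d n := by ring
          rw [e]
          exact hCB n i hi
      have hsmall : mu (f ⁻¹' C) ≠ ⊤ := by
        have hCsub : f ⁻¹' C = ⋃ j, f ⁻¹' ((fun i => a j + (V (2*j) + i) * d j) '' (Iio j)) := by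
          rw [hC, Set.preimage_iUnion]
        have hone : ∀ j : ℕ,
            mu (f ⁻¹' ((fun i => a j + (V (2*j) + i) * d j) '' (Iio j))) ≤ 2⁻¹ ^ j := by
          intro j
          have himg2 : f ⁻¹' ((fun i => a j + (V (2*j) + i) * d j) '' (Iio j)) ⊆
              ⋃ i ∈ Finset.range j, f ⁻¹' ({a j + (V (2*j) + i) * d j} : Set ℕ) := by
            intro n hn
            simp only [Set.mem_preimage, Set.mem_image, Set.mem_Iio] at hn
            obtain ⟨i, hij, hi⟩ := hn
            simp only [Set.mem_iUnion, Set.mem_preimage, Set.mem_singleton_iff, Finset.mem_range]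
            exact ⟨i, hij, hi.symm⟩
          refine le_trans (measure_mono himg2) ?_
          refine le_trans (measure_biUnion_finset_le _ _) ?_
          have hbnd : ∀ i ∈ Finset.range j,
              mu (f ⁻¹' ({a j + (V (2*j) + i) * d j} : Set ℕ)) ≤ 2⁻¹ ^ (2*j) := by
            intro i hi
            apply hwV
            have h1 : V (2*j) + i ≤ (V (2*j) + i) * d j := Nat.le_mul_of_pos_right _ (hd j)
            omega
          have hj2 : (j:ℝ≥0∞) * 2⁻¹ ^ j ≤ 1 := by
            rw [← ENNReal.inv_pow]
            have hle : (j:ℝ≥0∞) ≤ 2 ^ j := by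
              have h2 := (Nat.lt_two_pow_self (n := j)).le
              calc (j:ℝ≥0∞) ≤ ((2^j : ℕ) : ℝ≥0∞) := by exact_mod_cast h2
                _ = 2 ^ j := by push_cast; ring
            calc (j:ℝ≥0∞) * (2 ^ j)⁻¹ ≤ 2 ^ j * (2 ^ j)⁻¹ := mul_le_mul_left hle _
              _ = 1 := ENNReal.mul_inv_cancel (by positivity) (by simp)
          calc ∑ i ∈ Finset.range j, mu (f ⁻¹' ({a j + (V (2*j) + i) * d j} : Set ℕ))
              ≤ ∑ _i ∈ Finset.range j, (2⁻¹:ℝ≥0∞) ^ (2*j) := Finset.sum_le_sum hbnd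
            _ = (j:ℝ≥0∞) * 2⁻¹ ^ (2*j) := by
                rw [Finset.sum_const, Finset.card_range, nsmul_eq_mul]
            _ = ((j:ℝ≥0∞) * 2⁻¹ ^ j) * 2⁻¹ ^ j := by rw [two_mul, pow_add]; ring
            _ ≤ 1 * 2⁻¹ ^ j := mul_le_mul_left hj2 _
            _ = 2⁻¹ ^ j := one_mul _
        have hle2 : mu (f ⁻¹' C) ≤ 2 := by
          rw [hCsub]
          refine le_trans (measure_iUnion_le _) ?_
          refine le_trans (ENNReal.tsum_le_tsum hone) ?_
          rw [ENNReal.tsum_geometric, ENNReal.one_sub_inv_two, inv_inv]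
        exact ne_top_of_le_ne_top ENNReal.ofNat_ne_top hle2
      have hfinal := hcl C hCpos
      apply hfinal
      rw [mem_summableIdeal_iff]
      exact ne_top_of_le_ne_top hsmall (measure_mono Set.inter_subset_right)
    · -- some fiber measures bounded below : sparse range construction
      push_neg at hto
      obtain ⟨j₀, hj₀⟩ := hto
      set δ : ℝ≥0∞ := 2⁻¹ ^ j₀ with hδ
      have hδ0 : δ ≠ 0 := by
        rw [hδ]
        exact pow_ne_zero _ (ENNReal.inv_ne_zero.mpr ENNReal.ofNat_ne_top)
      have hδt : δ ≠ ⊤ := by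
        rw [hδ]
        exact ENNReal.pow_ne_top (ENNReal.inv_ne_top.mpr two_ne_zero)
      choose g hg1 hg2 using hj₀
      let s : ℕ → ℕ := fun n => Nat.rec (g 0) (fun _ sn => g (2 * sn + 1)) n
      have hs0 : s 0 = g 0 := rfl
      have hss : ∀ n, s (n+1) = g (2 * s n + 1) := fun n => rfl
      have hsstep : ∀ n, 2 * s n + 1 ≤ s (n+1) := fun n => by rw [hss n]; exact hg1 _
      have hsmono : StrictMono s :=
        strictMono_nat_of_lt_succ (fun n => by have := hsstep n; omega)
      have hsw : ∀ n, δ ≤ mu (f ⁻¹' {s n}) := by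
        intro n
        cases n with
        | zero => exact (hg2 0).le
        | succ n => rw [hss n]; exact (hg2 _).le
      have hAtop : mu (f ⁻¹' (Set.range s)) = ⊤ := by
        by_contra h
        have hdiv : mu (f ⁻¹' (Set.range s)) / δ ≠ ⊤ :=
          (ENNReal.div_lt_top h hδ0).ne
        obtain ⟨K, hK⟩ := ENNReal.exists_nat_gt hdiv
        have hlt2 : mu (f ⁻¹' (Set.range s)) < (K:ℝ≥0∞) * δ :=
          (ENNReal.div_lt_iff (Or.inl hδ0) (Or.inl hδt)).mp hK
        have hUdisj : (↑((Finset.range K).image s) : Set ℕ).PairwiseDisjoint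
            fun v => f ⁻¹' ({v} : Set ℕ) := by
          intro x _ y _ hxy
          rw [Function.onFun, Set.disjoint_left]
          rintro n h1 h2
          simp only [Set.mem_preimage, Set.mem_singleton_iff] at h1 h2
          exact hxy (h1.symm.trans h2)
        have hsub2 : (⋃ v ∈ (Finset.range K).image s, f ⁻¹' ({v} : Set ℕ)) ⊆
            f ⁻¹' (Set.range s) := by
          intro n hn
          simp only [Set.mem_iUnion, Set.mem_preimage, Set.mem_singleton_iff,
            Finset.mem_image, Finset.mem_range] at hn
          obtain ⟨v, ⟨i, -, rfl⟩, hfv⟩ := hn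
          exact Set.mem_preimage.mpr ⟨i, hfv.symm⟩
        have hge : (K:ℝ≥0∞) * δ ≤ mu (f ⁻¹' (Set.range s)) := by
          calc (K:ℝ≥0∞) * δ = ∑ _n ∈ Finset.range K, δ := by
                rw [Finset.sum_const, Finset.card_range, nsmul_eq_mul]
            _ ≤ ∑ n ∈ Finset.range K, mu (f ⁻¹' {s n}) := Finset.sum_le_sum fun n _ => hsw n
            _ = ∑ v ∈ (Finset.range K).image s, mu (f ⁻¹' {v}) :=
                (Finset.sum_image (f := fun v => mu (f ⁻¹' {v})) (fun x _ y _ h => hsmono.injective h)).symm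
            _ = mu (⋃ v ∈ (Finset.range K).image s, f ⁻¹' ({v} : Set ℕ)) :=
                (measure_biUnion_finset hUdisj fun v _ => meas _).symm
            _ ≤ mu (f ⁻¹' (Set.range s)) := measure_mono hsub2
        exact absurd hlt2 (not_lt.mpr hge)
      have hApos2 : f ⁻¹' (Set.range s) ∉ summableIdeal := fun hmem =>
        (mem_summableIdeal_iff _).mp hmem hAtop
      obtain ⟨B, hBsub, hBpos, -⟩ := hf _ hApos2
      obtain ⟨aq, dq, hdq, hm⟩ := (not_vdW_iff B).mp hBpos 3
      have hsub3 : B ⊆ Set.range s := hBsub.trans (Set.image_preimage_subset f _)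
      obtain ⟨i0, hi0⟩ := hsub3 (hm 0 (by norm_num))
      obtain ⟨i1, hi1⟩ := hsub3 (hm 1 (by norm_num))
      obtain ⟨i2, hi2⟩ := hsub3 (hm 2 (by norm_num))
      have l12 : i1 < i2 := hsmono.lt_iff_lt.mp (by rw [hi1, hi2]; omega)
      have hkey : 2 * s i1 + 1 ≤ s i2 :=
        le_trans (hsstep i1) (hsmono.monotone l12)
      rw [hi1, hi2] at hkey
      omega

end
end AuxBW

end AuxSection

theorem stmt17 : ¬ BWle vdWIdeal summableIdeal ∧ ¬ BWle summableIdeal vdWIdeal :=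
  ⟨AuxBW.dirA, AuxBW.dirB⟩
end
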